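/- arXiv:2209.14103 — 2 statements merged into one kernel-verified Lean document; each statement's English description precedes it below -/
import Mathlib

section
/- Fix δ ∈ ℝ. Let 0<β<mn, δ̃ ∈ ℝ, p⃗ a vector of exponents, a splitting β = Σ β_i with 0<β_i<n, and let (w,v⃗) be a pair of weights such that v_i^{−1} ∈ RH_∞ for every i with p_i = 1 and v_i^{−p_i'} is a doubling weight for every i with 1<p_i≤∞. If (w,v⃗) satisfies the global condition then (w,v⃗) satisfies the local condition. -/
open MeasureTheory Metric Set
open scoped ENNReal NNReal BigOperators
open scoped Classical

noncomputable section

/-- Euclidean space `ℝⁿ`. -/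
abbrev Rn (n : ℕ) : Type := EuclideanSpace ℝ (Fin n)

/-- The `q`-"norm" of a nonnegative function with respect to the measure `μ`,
for `q ∈ [1,∞]`; `q = ∞` gives the essential supremum. -/
noncomputable def LpNormE {α : Type*} [MeasurableSpace α] (μ : Measure α)
    (g : α → ℝ≥0∞) (q : ℝ≥0∞) : ℝ≥0∞ :=
  if q = ∞ then essSup g μ else (∫⁻ x, g x ^ q.toReal ∂μ) ^ (1 / q.toReal)

/-- Conjugate exponent in `[1,∞]`. -/
noncomputable def conjE (q : ℝ≥0∞) : ℝ≥0∞ :=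
  if q = 1 then ∞ else if q = ∞ then 1 else ENNReal.ofReal (q.toReal / (q.toReal - 1))

/-- Real-valued conjugate exponent of `q ∈ (1,∞]`. -/
noncomputable def conjR (q : ℝ≥0∞) : ℝ :=
  if q = ∞ then 1 else q.toReal / (q.toReal - 1)

/-- A weight: measurable, a.e. positive and finite, and locally integrable. -/
def IsWeight (n : ℕ) (u : Rn n → ℝ≥0∞) : Prop :=
  Measurable u ∧ (∀ᵐ x ∂(volume : Measure (Rn n)), 0 < u x ∧ u x < ∞) ∧
    ∀ (c : Rn n) (R : ℝ), 0 < R → ∫⁻ x in ball c R, u x < ∞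

/-- The `i`-th factor in the `H_m(p,β,δ̃)` condition over the ball `B(c,R)`
(`δ` is the fixed ambient parameter, `β i` the splitting of `β`). For `p i = 1`
the conjugate exponent is `∞` and the factor is an essential supremum. -/
noncomputable def HmFactor (n m : ℕ) (δ : ℝ) (β : Fin m → ℝ) (p : Fin m → ℝ≥0∞)
    (v : Fin m → Rn n → ℝ≥0∞) (c : Rn n) (R : ℝ) (i : Fin m) : ℝ≥0∞ :=
  LpNormE volume
    (fun y => (v i y)⁻¹ *
      (volume (ball c R) ^ (n : ℝ)⁻¹ + edist c y) ^ (-((n : ℝ) - β i + δ / (m : ℝ))))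
    (conjE (p i))

/-- The left-hand side of the `H_m(p,β,δ̃)` condition over the ball `B(c,R)`. -/
noncomputable def HmLHS (n m : ℕ) (δ δt : ℝ) (β : Fin m → ℝ) (p : Fin m → ℝ≥0∞)
    (w : Rn n → ℝ≥0∞) (v : Fin m → Rn n → ℝ≥0∞) (c : Rn n) (R : ℝ) : ℝ≥0∞ :=
  essSup w (volume.restrict (ball c R)) / volume (ball c R) ^ ((δt - δ) / (n : ℝ)) *
    ∏ i, HmFactor n m δ β p v c R i

/-- The class `H_m(p,β,δ̃)`, with fixed ambient parameter `δ` and splitting `β i`. -/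
def MemHm (n m : ℕ) (δ δt : ℝ) (β : Fin m → ℝ) (p : Fin m → ℝ≥0∞)
    (w : Rn n → ℝ≥0∞) (v : Fin m → Rn n → ℝ≥0∞) : Prop :=
  ∃ C : ℝ≥0∞, C ≠ ∞ ∧ ∀ (c : Rn n) (R : ℝ), 0 < R → HmLHS n m δ δt β p w v c R ≤ C

/-- The reverse Hölder class `RH_s`. -/
def MemRH (n : ℕ) (s : ℝ) (u : Rn n → ℝ≥0∞) : Prop :=
  ∃ C : ℝ≥0∞, C ≠ ∞ ∧ ∀ (c : Rn n) (R : ℝ), 0 < R →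
    ((volume (ball c R))⁻¹ * ∫⁻ x in ball c R, u x ^ s) ^ s⁻¹ ≤
      C * ((volume (ball c R))⁻¹ * ∫⁻ x in ball c R, u x)

/-- The reverse Hölder class `RH_∞`. -/
def MemRHinf (n : ℕ) (u : Rn n → ℝ≥0∞) : Prop :=
  ∃ C : ℝ≥0∞, C ≠ ∞ ∧ ∀ (c : Rn n) (R : ℝ), 0 < R →
    essSup u (volume.restrict (ball c R)) ≤
      C * ((volume (ball c R))⁻¹ * ∫⁻ x in ball c R, u x)

/-- The Muckenhoupt class `A_1`. -/
def MemA1 (n : ℕ) (u : Rn n → ℝ≥0∞) : Prop :=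
  ∃ C : ℝ≥0∞, C ≠ ∞ ∧ ∀ (c : Rn n) (R : ℝ), 0 < R →
    (volume (ball c R))⁻¹ * ∫⁻ x in ball c R, u x ≤
      C * essInf u (volume.restrict (ball c R))

/-- A doubling function: the integral over `2B` is controlled by the one over `B`. -/
def Doubling (n : ℕ) (u : Rn n → ℝ≥0∞) : Prop :=
  ∃ C : ℝ≥0∞, C ≠ ∞ ∧ ∀ (c : Rn n) (R : ℝ), 0 < R →
    ∫⁻ x in ball c (2 * R), u x ≤ C * ∫⁻ x in ball c R, u x

/-- The `i`-th factor in the global condition over the ball `B(c,R)`. -/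
noncomputable def GlobalFactor (n m : ℕ) (δ : ℝ) (β : Fin m → ℝ) (p : Fin m → ℝ≥0∞)
    (v : Fin m → Rn n → ℝ≥0∞) (c : Rn n) (R : ℝ) (i : Fin m) : ℝ≥0∞ :=
  LpNormE (volume.restrict (ball c R)ᶜ)
    (fun y => (v i y)⁻¹ * edist c y ^ (-((n : ℝ) - β i + δ / (m : ℝ)))) (conjE (p i))

/-- The global condition associated with the class `H_m(p,β,δ̃)`. -/
def GlobalCond (n m : ℕ) (δ δt : ℝ) (β : Fin m → ℝ) (p : Fin m → ℝ≥0∞)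
    (w : Rn n → ℝ≥0∞) (v : Fin m → Rn n → ℝ≥0∞) : Prop :=
  ∃ C : ℝ≥0∞, C ≠ ∞ ∧ ∀ (c : Rn n) (R : ℝ), 0 < R →
    essSup w (volume.restrict (ball c R)) / volume (ball c R) ^ ((δt - δ) / (n : ℝ)) *
      ∏ i, GlobalFactor n m δ β p v c R i ≤ C

/-- The local condition associated with the class `H_m(p,β,δ̃)`; here `β` is the
total (scalar) parameter. -/
def LocalCond (n m : ℕ) (δt β : ℝ) (p : Fin m → ℝ≥0∞)
    (w : Rn n → ℝ≥0∞) (v : Fin m → Rn n → ℝ≥0∞) : Prop :=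
  ∃ C : ℝ≥0∞, C ≠ ∞ ∧ ∀ (c : Rn n) (R : ℝ), 0 < R →
    essSup w (volume.restrict (ball c R)) /
        volume (ball c R) ^ (δt / (n : ℝ) + (∑ i, (p i)⁻¹).toReal - β / (n : ℝ)) *
      ∏ i, (if p i = 1 then essSup (fun x => (v i x)⁻¹) (volume.restrict (ball c R))
        else ((volume (ball c R))⁻¹ * ∫⁻ x in ball c R, (v i x)⁻¹ ^ conjR (p i)) ^
          (conjR (p i))⁻¹) ≤ C

/-- The multilinear class `A_{p⃗,∞}`. -/
def MemApInf (n m : ℕ) (p : Fin m → ℝ≥0∞) (v : Fin m → Rn n → ℝ≥0∞) : Prop :=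
  ∃ C : ℝ≥0∞, C ≠ ∞ ∧ ∀ (c : Rn n) (R : ℝ), 0 < R →
    essSup (fun x => ∏ i, v i x) (volume.restrict (ball c R)) *
      ∏ i, (if p i = 1 then essSup (fun x => (v i x)⁻¹) (volume.restrict (ball c R))
        else ((volume (ball c R))⁻¹ * ∫⁻ x in ball c R, (v i x)⁻¹ ^ conjR (p i)) ^
          (conjR (p i))⁻¹) ≤ C

/-- The multilinear class `A_{p⃗,q}` for `0 < q < ∞`. -/
def MemApq (n m : ℕ) (p : Fin m → ℝ≥0∞) (q : ℝ) (w : Fin m → Rn n → ℝ≥0∞) : Prop :=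
  ∃ C : ℝ≥0∞, C ≠ ∞ ∧ ∀ (c : Rn n) (R : ℝ), 0 < R →
    ((volume (ball c R))⁻¹ * ∫⁻ x in ball c R, ∏ i, w i x ^ q) ^ (1 / q) *
      ∏ i, (if p i = 1 then essSup (fun x => (w i x)⁻¹) (volume.restrict (ball c R))
        else ((volume (ball c R))⁻¹ * ∫⁻ x in ball c R, (w i x)⁻¹ ^ conjR (p i)) ^
          (conjR (p i))⁻¹) ≤ C

/-- The multilinear Muckenhoupt class `A_{r⃗}`. -/
def MemAvec (n m : ℕ) (r : Fin m → ℝ≥0∞) (u : Fin m → Rn n → ℝ≥0∞) : Prop :=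
  ∃ C : ℝ≥0∞, C ≠ ∞ ∧ ∀ (c : Rn n) (R : ℝ), 0 < R →
    ((volume (ball c R))⁻¹ *
        ∫⁻ x in ball c R, ∏ i, u i x ^ ((∑ j, (r j)⁻¹).toReal⁻¹ * ((r i)⁻¹).toReal)) ^
        (∑ j, (r j)⁻¹).toReal *
      ∏ i, (if r i = 1 then essSup (fun x => (u i x)⁻¹) (volume.restrict (ball c R))
        else ((volume (ball c R))⁻¹ * ∫⁻ x in ball c R, u i x ^ (1 - conjR (r i))) ^
          (conjR (r i))⁻¹) ≤ C

/-- Product Lebesgue measure on `(ℝⁿ)^m`. -/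
noncomputable def pim (n m : ℕ) : Measure (Fin m → Rn n) :=
  Measure.pi fun _ => (volume : Measure (Rn n))

/-- Size condition for a multilinear fractional kernel of order `α`. -/
def SizeCond (n m : ℕ) (α : ℝ) (K : Rn n → (Fin m → Rn n) → ℝ) : Prop :=
  ∃ C : ℝ, 0 < C ∧ ∀ (x : Rn n) (y : Fin m → Rn n), (∑ i, dist x (y i)) ≠ 0 →
    |K x y| ≤ C * (∑ i, dist x (y i)) ^ (α - (m : ℝ) * (n : ℝ))

/-- Smoothness condition with exponent `γ` for a multilinear fractional kernel. -/
def SmoothCond (n m : ℕ) (α γ : ℝ) (K : Rn n → (Fin m → Rn n) → ℝ) : Prop :=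
  ∃ C : ℝ, 0 < C ∧ ∀ (x x' : Rn n) (y : Fin m → Rn n),
    2 * dist x x' < ∑ i, dist x (y i) →
    |K x y - K x' y| ≤ C * dist x x' ^ γ * (∑ i, dist x (y i)) ^ (α - (m : ℝ) * (n : ℝ) - γ)

/-- The Lipschitz space `Λ(δ)`. -/
def MemLip (n : ℕ) (δ : ℝ) (b : Rn n → ℝ) : Prop :=
  ∃ C : ℝ, 0 ≤ C ∧ ∀ x y : Rn n, |b x - b y| ≤ C * dist x y ^ δ

/-- The multilinear integral operator with kernel `K`. -/
noncomputable def TOp (n m : ℕ) (K : Rn n → (Fin m → Rn n) → ℝ)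
    (f : Fin m → Rn n → ℝ) (x : Rn n) : ℝ :=
  ∫ y, K x y * ∏ i, f i (y i) ∂pim n m

/-- The sum-type multilinear commutator `T_{α,b}`. -/
noncomputable def TSumComm (n m : ℕ) (K : Rn n → (Fin m → Rn n) → ℝ)
    (b : Fin m → Rn n → ℝ) (f : Fin m → Rn n → ℝ) (x : Rn n) : ℝ :=
  ∑ j, ∫ y, (b j x - b j (y j)) * K x y * ∏ i, f i (y i) ∂pim n m

/-- The product-type multilinear commutator `𝒯_{α,b}` (integral representation). -/
noncomputable def TProdComm (n m : ℕ) (K : Rn n → (Fin m → Rn n) → ℝ)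
    (b : Fin m → Rn n → ℝ) (f : Fin m → Rn n → ℝ) (x : Rn n) : ℝ :=
  ∫ y, K x y * ∏ i, (b i x - b i (y i)) * f i (y i) ∂pim n m

/-- `‖f · v‖_q` for a real function `f` and a weight `v`. -/
noncomputable def wLpNorm (n : ℕ) (f : Rn n → ℝ) (v : Rn n → ℝ≥0∞) (q : ℝ≥0∞) : ℝ≥0∞ :=
  LpNormE volume (fun x => ENNReal.ofReal |f x| * v x) q

/-- The (nonnegative) multilinear fractional integral `I_{a,m}`. -/
noncomputable def IfracE (n m : ℕ) (a : ℝ) (g : Fin m → Rn n → ℝ≥0∞) (x : Rn n) : ℝ≥0∞ :=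
  ∫⁻ y, (∑ i, edist x (y i)) ^ (a - (m : ℝ) * (n : ℝ)) * ∏ i, g i (y i) ∂pim n m

/-- Commuting with `b` in the `j`-th entry. -/
noncomputable def commAt (n m : ℕ) (T : (Fin m → Rn n → ℝ) → Rn n → ℝ)
    (g : Rn n → ℝ) (j : Fin m) (f : Fin m → Rn n → ℝ) (x : Rn n) : ℝ :=
  g x * T f x - T (Function.update f j fun z => g z * f j z) x

/-- The iterated commutator `[b_k, … [b_2, [b_1, T]_1]_2 … ]_k`. -/
noncomputable def iterComm (n m : ℕ) (T : (Fin m → Rn n → ℝ) → Rn n → ℝ)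
    (b : Fin m → Rn n → ℝ) : ℕ → (Fin m → Rn n → ℝ) → Rn n → ℝ
  | 0 => T
  | k + 1 => fun f x =>
      if h : k < m then commAt n m (iterComm n m T b k) (b ⟨k, h⟩) ⟨k, h⟩ f x
      else iterComm n m T b k f x

end

section AuxGIL
open Filter

lemma lint_le_essSup {α : Type*} [MeasurableSpace α] (μ : Measure α) (f : α → ℝ≥0∞) :
    ∫⁻ x, f x ∂μ ≤ essSup f μ * μ univ := by
  calc ∫⁻ x, f x ∂μ ≤ ∫⁻ _, essSup f μ ∂μ := lintegral_mono_ae (ENNReal.ae_le_essSup f)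
  _ = essSup f μ * μ univ := lintegral_const _

lemma essSup_restrict_mono {α : Type*} [MeasurableSpace α] (μ : Measure α) (f : α → ℝ≥0∞)
    {s t : Set α} (h : s ⊆ t) :
    essSup f (μ.restrict s) ≤ essSup f (μ.restrict t) :=
  essSup_mono_measure' (Measure.restrict_mono h le_rfl)

lemma setLint_le {α : Type*} [MeasurableSpace α] (μ : Measure α) (f : α → ℝ≥0∞)
    {s t : Set α} (h : s ⊆ t) :
    ∫⁻ x in s, f x ∂μ ≤ essSup f (μ.restrict t) * μ.restrict s univ := by
  refine le_trans (lint_le_essSup _ _) ?_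
  exact mul_le_mul_left (essSup_restrict_mono μ f h) _

lemma rh_step {n : ℕ} (u : Rn n → ℝ≥0∞) (C : ℝ≥0∞)
    (hRH : ∀ (c : Rn n) (R : ℝ), 0 < R → essSup u (volume.restrict (ball c R)) ≤
      C * ((volume (ball c R))⁻¹ * ∫⁻ x in ball c R, u x))
    (z : Rn n) {s lam : ℝ} (hs : 0 < s) (hlam0 : 0 < lam) (hlam1 : lam ≤ 1)
    (hsmall : C * ENNReal.ofReal (1 - lam ^ n) ≤ 1 / 2)
    (hfin : essSup u (volume.restrict (ball z s)) ≠ ∞) :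
    essSup u (volume.restrict (ball z s)) ≤
      2 * (C * essSup u (volume.restrict (ball z (lam * s)))) := by
  set S := essSup u (volume.restrict (ball z s)) with hS
  set T := essSup u (volume.restrict (ball z (lam * s))) with hT
  set V := volume (ball z s) with hV
  have hV0 : V ≠ 0 := (measure_ball_pos _ _ hs).ne'
  have hVtop : V ≠ ∞ := measure_ball_lt_top.ne
  have hlamn : lam ^ n ≤ 1 := pow_le_one₀ hlam0.le hlam1
  have hsub : ball z (lam * s) ⊆ ball z s :=
    ball_subset_ball (by nlinarith)
  have hvs : volume (ball z (lam * s)) = ENNReal.ofReal (lam ^ n) * V := by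
    rw [hV, Measure.addHaar_ball_mul_of_pos _ z hlam0 s, finrank_euclideanSpace_fin,
      ← Measure.addHaar_ball_center volume z]
  set q := ENNReal.ofReal (1 - lam ^ n) with hq
  have hdiff : volume (ball z s \ ball z (lam * s)) ≤ q * V := by
    rw [measure_diff hsub measurableSet_ball.nullMeasurableSet
      (lt_of_le_of_lt (measure_mono hsub) measure_ball_lt_top).ne, hvs]
    rw [tsub_le_iff_right]
    calc V = 1 * V := (one_mul V).symm
    _ = (q + ENNReal.ofReal (lam ^ n)) * V := by
        rw [hq, ← ENNReal.ofReal_add (by linarith) (by positivity)]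
        norm_num
    _ = q * V + ENNReal.ofReal (lam ^ n) * V := by ring
    _ ≤ q * V + ENNReal.ofReal (lam ^ n) * V := le_rfl
  have hint : ∫⁻ x in ball z s, u x ≤ T * V + S * (q * V) := by
    have h1 : ∫⁻ x in ball z s, u x ≤
        (∫⁻ x in ball z (lam * s), u x) + ∫⁻ x in ball z s \ ball z (lam * s), u x := by
      refine le_trans (lintegral_mono_set ?_) (lintegral_union_le _ _ _)
      rw [union_diff_cancel hsub]
    refine h1.trans (add_le_add ?_ ?_)
    · refine le_trans (setLint_le volume u (subset_refl _)) ?_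
      rw [Measure.restrict_apply_univ]
      exact mul_le_mul' le_rfl (measure_mono hsub)
    · refine le_trans (setLint_le volume u diff_subset) ?_
      rw [Measure.restrict_apply_univ]
      exact mul_le_mul' le_rfl hdiff
  have hmain : S ≤ C * T + C * q * S := by
    have h0 := hRH z s hs
    have h2 : V⁻¹ * (T * V + S * (q * V)) = T + S * q := by
      have hVc : V⁻¹ * V = 1 := ENNReal.inv_mul_cancel hV0 hVtop
      calc V⁻¹ * (T * V + S * (q * V)) = T * (V⁻¹ * V) + S * q * (V⁻¹ * V) := by ring
      _ = T + S * q := by rw [hVc]; ring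
    calc S ≤ C * (V⁻¹ * ∫⁻ x in ball z s, u x) := h0
    _ ≤ C * (V⁻¹ * (T * V + S * (q * V))) := by
        exact mul_le_mul' le_rfl (mul_le_mul' le_rfl hint)
    _ = C * (T + S * q) := by rw [h2]
    _ = C * T + C * q * S := by ring
  have hhalf : S / 2 ≤ C * T := by
    have hCqS : C * q * S ≤ S / 2 := by
      calc C * q * S ≤ (1 / 2) * S := mul_le_mul_left hsmall S
      _ = S / 2 := by rw [one_div, ENNReal.div_eq_inv_mul]
    have h4 : S ≤ C * T + S / 2 := hmain.trans (add_le_add le_rfl hCqS)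
    have h3 : S - S / 2 ≤ C * T := tsub_le_iff_right.mpr h4
    rwa [ENNReal.sub_half hfin] at h3
  calc S = 2 * (S / 2) := by rw [ENNReal.mul_div_cancel' (by norm_num) (by norm_num)]
  _ ≤ 2 * (C * T) := mul_le_mul' le_rfl hhalf

lemma rh_chain {n : ℕ} (u : Rn n → ℝ≥0∞) (C : ℝ≥0∞)
    (hRH : ∀ (c : Rn n) (R : ℝ), 0 < R → essSup u (volume.restrict (ball c R)) ≤
      C * ((volume (ball c R))⁻¹ * ∫⁻ x in ball c R, u x))
    (z : Rn n) {s lam : ℝ} (hs : 0 < s) (hlam0 : 0 < lam) (hlam1 : lam ≤ 1)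
    (hsmall : C * ENNReal.ofReal (1 - lam ^ n) ≤ 1 / 2)
    (hfin : essSup u (volume.restrict (ball z s)) ≠ ∞) :
    ∀ k : ℕ, essSup u (volume.restrict (ball z s)) ≤
      (2 * C) ^ k * essSup u (volume.restrict (ball z (lam ^ k * s))) := by
  intro k
  induction k with
  | zero => simp
  | succ k ih =>
    have hsk : 0 < lam ^ k * s := by positivity
    have hsub : ball z (lam ^ k * s) ⊆ ball z s :=
      ball_subset_ball (by nlinarith [pow_le_one₀ hlam0.le hlam1 (n := k)])
    have hfin' : essSup u (volume.restrict (ball z (lam ^ k * s))) ≠ ∞ :=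
      fun h => hfin (top_le_iff.mp (h ▸ essSup_restrict_mono volume u hsub))
    have hstep := rh_step u C hRH z hsk hlam0 hlam1 hsmall hfin'
    calc essSup u (volume.restrict (ball z s))
        ≤ (2 * C) ^ k * essSup u (volume.restrict (ball z (lam ^ k * s))) := ih
      _ ≤ (2 * C) ^ k * (2 * (C * essSup u (volume.restrict (ball z (lam * (lam ^ k * s)))))) :=
          mul_le_mul' le_rfl hstep
      _ = (2 * C) ^ (k + 1) * essSup u (volume.restrict (ball z (lam ^ (k + 1) * s))) := by
          rw [show lam * (lam ^ k * s) = lam ^ (k + 1) * s by ring]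
          ring

lemma rh_shrink {n : ℕ} (hn : 1 ≤ n) (u : Rn n → ℝ≥0∞) (C : ℝ≥0∞) (hC : C ≠ ∞)
    (hRH : ∀ (c : Rn n) (R : ℝ), 0 < R → essSup u (volume.restrict (ball c R)) ≤
      C * ((volume (ball c R))⁻¹ * ∫⁻ x in ball c R, u x)) :
    ∃ K : ℝ≥0∞, K ≠ ∞ ∧ ∀ (z : Rn n) (s : ℝ), 0 < s →
      essSup u (volume.restrict (ball z s)) ≠ ∞ →
      essSup u (volume.restrict (ball z s)) ≤
        K * essSup u (volume.restrict (ball z (s / 32))) := by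
  set c0 : ℝ := max C.toReal 1 with hc0
  have hc01 : 1 ≤ c0 := le_max_right _ _
  have hc0pos : 0 < c0 := lt_of_lt_of_le one_pos hc01
  set x : ℝ := 1 - 1 / (2 * c0) with hx
  have hx0 : 0 < x := by
    have : 1 / (2 * c0) ≤ 1 / 2 := by
      apply one_div_le_one_div_of_le <;> linarith
    simp only [hx]; linarith
  have hx1 : x < 1 := by
    have : 0 < 1 / (2 * c0) := by positivity
    simp only [hx]; linarith
  set lam : ℝ := x ^ ((n : ℝ)⁻¹) with hlam
  have hlam0 : 0 < lam := Real.rpow_pos_of_pos hx0 _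
  have hlam1 : lam < 1 := Real.rpow_lt_one hx0.le hx1 (by positivity)
  have hlamn : lam ^ n = x := by
    rw [hlam, ← Real.rpow_natCast (x ^ ((n:ℝ)⁻¹)) n, ← Real.rpow_mul hx0.le]
    rw [inv_mul_cancel₀ (by exact_mod_cast Nat.pos_of_ne_zero (by omega) |>.ne'), Real.rpow_one]
  have hsmall : C * ENNReal.ofReal (1 - lam ^ n) ≤ 1 / 2 := by
    rw [hlamn, hx]
    have h1 : C ≤ ENNReal.ofReal c0 := by
      rw [← ENNReal.ofReal_toReal hC]
      exact ENNReal.ofReal_le_ofReal (le_max_left _ _)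
    calc C * ENNReal.ofReal (1 - (1 - 1 / (2 * c0)))
        ≤ ENNReal.ofReal c0 * ENNReal.ofReal (1 / (2 * c0)) := by
          rw [show (1 - (1 - 1 / (2 * c0))) = 1 / (2 * c0) by ring]
          exact mul_le_mul' h1 le_rfl
      _ = ENNReal.ofReal (c0 * (1 / (2 * c0))) := (ENNReal.ofReal_mul hc0pos.le).symm
      _ = ENNReal.ofReal (1 / 2) := by
          congr 1
          field_simp
      _ ≤ 1 / 2 := by
          rw [ENNReal.ofReal_div_of_pos (by norm_num)]
          simp
  obtain ⟨N, hN⟩ := exists_pow_lt_of_lt_one (show (0:ℝ) < 1/32 by norm_num) hlam1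
  refine ⟨(2 * C) ^ N, ENNReal.pow_ne_top (ENNReal.mul_ne_top (by norm_num) hC), fun z s hs hfin => ?_⟩
  refine (rh_chain u C hRH z hs hlam0 hlam1.le hsmall hfin N).trans ?_
  refine mul_le_mul' le_rfl (essSup_restrict_mono volume u (ball_subset_ball ?_))
  calc lam ^ N * s ≤ (1 / 32) * s := by nlinarith [pow_pos hlam0 N]
    _ = s / 32 := by ring

lemma doub3 {n : ℕ} (u : Rn n → ℝ≥0∞) (C : ℝ≥0∞)
    (hD : ∀ (c : Rn n) (R : ℝ), 0 < R →
      ∫⁻ x in ball c (2 * R), u x ≤ C * ∫⁻ x in ball c R, u x)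
    (z : Rn n) {R : ℝ} (hR : 0 < R) :
    ∫⁻ x in ball z (4 * R), u x ≤ C ^ 3 * ∫⁻ x in ball z (R / 2), u x := by
  have h1 := hD z (2 * R) (by linarith)
  have h2 := hD z R hR
  have h3 := hD z (R / 2) (by linarith)
  rw [show 2 * (2 * R) = 4 * R by ring] at h1
  rw [show 2 * (R / 2) = R by ring] at h3
  calc ∫⁻ x in ball z (4 * R), u x ≤ C * ∫⁻ x in ball z (2 * R), u x := h1
    _ ≤ C * (C * ∫⁻ x in ball z R, u x) := mul_le_mul' le_rfl h2
    _ ≤ C * (C * (C * ∫⁻ x in ball z (R / 2), u x)) :=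
        mul_le_mul' le_rfl (mul_le_mul' le_rfl h3)
    _ = C ^ 3 * ∫⁻ x in ball z (R / 2), u x := by ring

lemma essSup_cover {α ι : Type*} [MeasurableSpace α] (μ : Measure α) (f : α → ℝ≥0∞)
    (hf : Measurable f) {s : Set α} (F : Finset ι) (t : ι → Set α)
    (ht : ∀ i, MeasurableSet (t i)) (hs : s ⊆ ⋃ i ∈ F, t i) :
    essSup f (μ.restrict s) ≤ F.sup fun i => essSup f (μ.restrict (t i)) := by
  set a := F.sup fun i => essSup f (μ.restrict (t i)) with ha
  refine essSup_le_of_ae_le _ ?_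
  have hE : MeasurableSet {x | a < f x} := measurableSet_lt measurable_const hf
  rw [Filter.EventuallyLE, ae_iff]
  simp only [not_le]
  rw [Measure.restrict_apply hE]
  have hsub : {x | a < f x} ∩ s ⊆ ⋃ i ∈ F, {x | a < f x} ∩ t i := by
    rintro x ⟨hx1, hx2⟩
    rcases mem_iUnion₂.mp (hs hx2) with ⟨i, hi, hti⟩
    exact mem_iUnion₂.mpr ⟨i, hi, hx1, hti⟩
  refine measure_mono_null hsub ((measure_biUnion_null_iff F.countable_toSet).mpr ?_)
  intro i hi
  have h1 : μ.restrict (t i) {x | essSup f (μ.restrict (t i)) < f x} = 0 := by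
    have := ENNReal.ae_le_essSup (μ := μ.restrict (t i)) f
    rw [ae_iff] at this
    simpa only [not_le] using this
  rw [Measure.restrict_apply (measurableSet_lt measurable_const hf)] at h1
  refine measure_mono_null ?_ h1
  rintro x ⟨hx1, hx2⟩
  simp only [mem_setOf_eq] at hx1 ⊢
  exact ⟨lt_of_le_of_lt (Finset.le_sup hi) hx1, hx2⟩

lemma exists_bad_point {n : ℕ} (u : Rn n → ℝ≥0∞) (hu : Measurable u) (c : Rn n) {R : ℝ}
    (hinf : essSup u (volume.restrict (ball c R)) = ∞) :
    ∃ z₀ ∈ closedBall c R, ∀ ρ : ℝ, 0 < ρ →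
      essSup u (volume.restrict (ball z₀ ρ)) = ∞ := by
  by_contra hcon
  push_neg at hcon
  have hch : ∀ z : Rn n, ∃ ρ : ℝ, z ∈ closedBall c R →
      (0 < ρ ∧ essSup u (volume.restrict (ball z ρ)) ≠ ∞) := by
    intro z
    by_cases hz : z ∈ closedBall c R
    · obtain ⟨ρ, hρ, hne⟩ := hcon z hz
      exact ⟨ρ, fun _ => ⟨hρ, hne⟩⟩
    · exact ⟨1, fun h => absurd h hz⟩
  choose ρ hρ using hch
  set U : Rn n → Set (Rn n) := fun z => if z ∈ closedBall c R then ball z (ρ z) else ∅ with hU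
  have hUopen : ∀ z, IsOpen (U z) := by
    intro z; rw [hU]; dsimp only; split <;> [exact isOpen_ball; exact isOpen_empty]
  have hcover : closedBall c R ⊆ ⋃ z, U z := by
    intro z hz
    refine mem_iUnion.mpr ⟨z, ?_⟩
    rw [hU]; simp only [if_pos hz]
    exact mem_ball_self (hρ z hz).1
  obtain ⟨F, hF⟩ := (isCompact_closedBall c R).elim_finite_subcover U hUopen hcover
  have hmeas : ∀ z, MeasurableSet (U z) := by
    intro z; rw [hU]; dsimp only
    split <;> [exact measurableSet_ball; exact MeasurableSet.empty]
  have := essSup_cover volume u hu F U hmeas (ball_subset_closedBall.trans hF)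
  rw [hinf] at this
  have hlt : (F.sup fun z => essSup u (volume.restrict (U z))) < ∞ := by
    rw [Finset.sup_lt_iff (by simp)]
    intro z _
    by_cases hz : z ∈ closedBall c R
    · rw [hU]; simp only [if_pos hz]
      exact lt_top_iff_ne_top.mpr (hρ z hz).2
    · rw [hU]; simp only [if_neg hz, Measure.restrict_empty, essSup_measure_zero]
      exact bot_lt_top
  exact absurd (top_le_iff.mp this) hlt.ne

lemma ae_zero_on_ball {n : ℕ} (hn : 1 ≤ n) (w : Rn n → ℝ≥0∞) (z₀ : Rn n)
    (h : ∀ (q : Rn n) (r : ℝ), 0 < r → r < dist q z₀ →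
      volume ({x | w x ≠ 0} ∩ ball q r) = 0)
    (c : Rn n) (R : ℝ) : volume ({x | w x ≠ 0} ∩ ball c R) = 0 := by
  haveI : Nonempty (Fin n) := ⟨⟨0, hn⟩⟩
  set f : {q : Rn n // q ≠ z₀} → Set (Rn n) := fun q => ball q.1 (dist q.1 z₀ / 2) with hf
  obtain ⟨T, hTc, hTU⟩ := TopologicalSpace.isOpen_iUnion_countable f (fun q => isOpen_ball)
  have hz0 : volume ({z₀} : Set (Rn n)) = 0 := measure_singleton z₀
  have hsub : {x | w x ≠ 0} ∩ ball c R ⊆ (⋃ q ∈ T, {x | w x ≠ 0} ∩ f q) ∪ {z₀} := by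
    intro x ⟨hx1, _⟩
    by_cases hx : x = z₀
    · exact Or.inr (hx ▸ rfl)
    · left
      have hxU : x ∈ ⋃ q, f q := by
        refine mem_iUnion.mpr ⟨⟨x, hx⟩, ?_⟩
        rw [hf]
        exact mem_ball_self (by simp [dist_pos.mpr hx])
      rw [← hTU] at hxU
      rcases mem_iUnion₂.mp hxU with ⟨q, hq, hmem⟩
      exact mem_iUnion₂.mpr ⟨q, hq, hx1, hmem⟩
  refine measure_mono_null hsub (measure_union_null ?_ hz0)
  refine (measure_biUnion_null_iff hTc).mpr fun q _ => ?_
  exact h q.1 (dist q.1 z₀ / 2) (by simp [dist_pos.mpr q.2]) (by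
    have := dist_pos.mpr q.2; linarith)

lemma rpow_ne_top' {x : ℝ≥0∞} (h0 : x ≠ 0) (ht : x ≠ ∞) (e : ℝ) : x ^ e ≠ ∞ := by
  intro h
  rcases ENNReal.rpow_eq_top_iff.mp h with ⟨h', _⟩ | ⟨h', _⟩
  exacts [h0 h', ht h']

lemma rpow_ne_zero' {x : ℝ≥0∞} (h0 : x ≠ 0) (ht : x ≠ ∞) (e : ℝ) : x ^ e ≠ 0 := by
  intro h
  rcases ENNReal.rpow_eq_zero_iff.mp h with ⟨h', _⟩ | ⟨h', _⟩
  exacts [h0 h', ht h']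

lemma rpow_upper {ER x : ℝ≥0∞} (e : ℝ) (hER0 : ER ≠ 0)
    (h1 : ER ≤ x) (h2 : x ≤ 2 * ER) : x ^ e ≤ (1 + (2:ℝ≥0∞) ^ e) * ER ^ e := by
  rcases le_or_gt 0 e with he | he
  · calc x ^ e ≤ (2 * ER) ^ e := ENNReal.rpow_le_rpow h2 he
      _ = 2 ^ e * ER ^ e := ENNReal.mul_rpow_of_ne_zero (by norm_num) hER0 e
      _ ≤ (1 + 2 ^ e) * ER ^ e := mul_le_mul_left (le_add_self) _
  · have hx : x ^ e ≤ ER ^ e := by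
      rw [show e = -(-e) by ring, ENNReal.rpow_neg x, ENNReal.rpow_neg ER]
      exact ENNReal.inv_le_inv.mpr (ENNReal.rpow_le_rpow h1 (by linarith))
    exact hx.trans (le_mul_of_one_le_left' le_self_add)

lemma one_le_mul_rpow {ER x : ℝ≥0∞} (e : ℝ) (hER0 : ER ≠ 0)
    (hx0 : x ≠ 0) (hxt : x ≠ ∞) (h1 : ER ≤ x) (h2 : x ≤ 2 * ER) :
    1 ≤ ((1 + (2:ℝ≥0∞) ^ e) * ER ^ e) * x ^ (-e) := by
  calc (1:ℝ≥0∞) = x ^ e * x ^ (-e) := by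
        rw [← ENNReal.rpow_add _ _ hx0 hxt]; simp
  _ ≤ _ := mul_le_mul_left (rpow_upper e hER0 h1 h2) _

lemma rpow_min_le {a b x : ℝ≥0∞} (e : ℝ) (h1 : a ≤ x) (h2 : x ≤ b) :
    min (a ^ e) (b ^ e) ≤ x ^ e := by
  rcases le_or_gt 0 e with he | he
  · exact le_trans (min_le_left _ _) (ENNReal.rpow_le_rpow h1 he)
  · refine le_trans (min_le_right _ _) ?_
    rw [show e = -(-e) by ring, ENNReal.rpow_neg x, ENNReal.rpow_neg b]
    exact ENNReal.inv_le_inv.mpr (ENNReal.rpow_le_rpow h2 (by linarith))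

lemma prod_rpow_sum {m : ℕ} (x : ℝ≥0∞) (h0 : x ≠ 0) (ht : x ≠ ∞) (f : Fin m → ℝ) :
    ∏ i, x ^ f i = x ^ (∑ i, f i) := by
  have : ∀ s : Finset (Fin m), ∏ i ∈ s, x ^ f i = x ^ (∑ i ∈ s, f i) := by
    intro s
    induction s using Finset.cons_induction with
    | empty => simp
    | cons a s ha ih =>
        rw [Finset.prod_cons, Finset.sum_cons, ih, ENNReal.rpow_add _ _ h0 ht]
  exact this _

lemma conjE_one_eq : conjE 1 = ∞ := by simp [conjE]

lemma conj_facts {q : ℝ≥0∞} (h1 : 1 < q) :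
    conjE q ≠ ∞ ∧ (conjE q).toReal = conjR q ∧ 1 ≤ conjR q := by
  rcases eq_or_ne q ∞ with rfl | hq
  · exact ⟨by simp [conjE], by simp [conjE, conjR], by simp [conjR]⟩
  · have hq1 : q ≠ 1 := h1.ne'
    have ht : 1 < q.toReal := by
      rw [show (1:ℝ) = (1:ℝ≥0∞).toReal by simp]
      exact (ENNReal.toReal_lt_toReal (by norm_num) hq).mpr h1
    have hpos : 0 < q.toReal / (q.toReal - 1) := div_pos (by linarith) (by linarith)
    have hcr : conjR q = q.toReal / (q.toReal - 1) := by rw [conjR, if_neg hq]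
    have hce : conjE q = ENNReal.ofReal (q.toReal / (q.toReal - 1)) := by
      rw [conjE, if_neg hq1, if_neg hq]
    refine ⟨by simp [hce], by rw [hce, ENNReal.toReal_ofReal hpos.le, hcr], ?_⟩
    rw [hcr, le_div_iff₀ (by linarith)]
    linarith

lemma conjR_inv_eq {q : ℝ≥0∞} (h1 : 1 < q) : (conjR q)⁻¹ = 1 - (q⁻¹).toReal := by
  rcases eq_or_ne q ∞ with rfl | hq
  · simp [conjR]
  · have ht : 1 < q.toReal := by
      rw [show (1:ℝ) = (1:ℝ≥0∞).toReal by simp]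
      exact (ENNReal.toReal_lt_toReal (by norm_num) hq).mpr h1
    rw [conjR, if_neg hq, ENNReal.toReal_inv, inv_div]
    field_simp

lemma vol_ball_rpow {n : ℕ} (hn : 1 ≤ n) (c : Rn n) {R : ℝ} (hR : 0 < R) (a : ℝ) :
    ENNReal.ofReal R ^ a =
      volume (ball (0 : Rn n) 1) ^ (-(a / (n:ℝ))) * volume (ball c R) ^ (a / (n:ℝ)) := by
  set κ := volume (ball (0 : Rn n) 1) with hκ
  have hκ0 : κ ≠ 0 := (measure_ball_pos _ _ one_pos).ne'
  have hκt : κ ≠ ∞ := measure_ball_lt_top.ne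
  have hER0 : ENNReal.ofReal R ≠ 0 := (ENNReal.ofReal_pos.mpr hR).ne'
  have hnn : ((n:ℝ)) ≠ 0 := Nat.cast_ne_zero.mpr (by omega)
  have hvb : volume (ball c R) = ENNReal.ofReal R ^ (n : ℕ) * κ := by
    rw [Measure.addHaar_ball_of_pos _ _ hR, finrank_euclideanSpace_fin,
      ENNReal.ofReal_pow hR.le]
  rw [hvb, ENNReal.mul_rpow_of_ne_zero (pow_ne_zero _ hER0) hκ0,
    ← ENNReal.rpow_natCast (ENNReal.ofReal R) n, ← ENNReal.rpow_mul,
    show (n:ℝ) * (a / (n:ℝ)) = a by field_simp,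
    show κ ^ (-(a / (n:ℝ))) * (ENNReal.ofReal R ^ a * κ ^ (a / (n:ℝ)))
      = κ ^ (-(a / (n:ℝ)) + a / (n:ℝ)) * ENNReal.ofReal R ^ a by
        rw [ENNReal.rpow_add _ _ hκ0 hκt]; ring]
  rw [neg_add_cancel, ENNReal.rpow_zero, one_mul]

lemma glob_factor_ne_zero (n m : ℕ) (hn : 1 ≤ n) (δ : ℝ) (β : Fin m → ℝ)
    (p : Fin m → ℝ≥0∞) (v : Fin m → Rn n → ℝ≥0∞) (j : Fin m) (hpj : 1 ≤ p j)
    (hvj : IsWeight n (v j)) (c : Rn n) {R : ℝ} (hR : 0 < R) :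
    GlobalFactor n m δ β p v c R j ≠ 0 := by
  set e : ℝ := (n:ℝ) - β j + δ / (m:ℝ) with he
  set g : Rn n → ℝ≥0∞ := fun y => (v j y)⁻¹ * edist c y ^ (-e) with hg
  have hgmeas : Measurable g :=
    (hvj.1.inv).mul ((continuous_const.edist continuous_id).measurable.pow_const _)
  intro h0
  have hae : g =ᵐ[volume.restrict (ball c R)ᶜ] 0 := by
    by_cases hpj1 : p j = 1
    · have hconj : conjE (p j) = ∞ := by rw [hpj1]; exact conjE_one_eq
      rw [GlobalFactor, LpNormE, if_pos hconj] at h0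
      exact ENNReal.essSup_eq_zero_iff.mp h0
    · have hgt : 1 < p j := lt_of_le_of_ne hpj (fun h => hpj1 h.symm)
      obtain ⟨hce, hct, hc1⟩ := conj_facts hgt
      rw [GlobalFactor, LpNormE, if_neg hce, hct] at h0
      have hq0 : 0 < conjR (p j) := lt_of_lt_of_le one_pos hc1
      have hint : ∫⁻ y, g y ^ conjR (p j) ∂(volume.restrict (ball c R)ᶜ) = 0 := by
        rcases ENNReal.rpow_eq_zero_iff.mp h0 with ⟨h', _⟩ | ⟨_, h'⟩
        · exact h'
        · exfalso
          have : 0 < 1 / conjR (p j) := by positivity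
          linarith
      have := (lintegral_eq_zero_iff (hgmeas.pow_const _)).mp hint
      filter_upwards [this] with y hy
      simp only [Pi.zero_apply] at hy ⊢
      rcases ENNReal.rpow_eq_zero_iff.mp hy with ⟨h', _⟩ | ⟨_, h'⟩
      · exact h'
      · exfalso; linarith
  -- the set where g ≠ 0 is null in the complement
  have h1 : volume ({y | g y ≠ 0} ∩ (ball c R)ᶜ) = 0 := by
    have h2 := ae_iff.mp hae
    rw [Measure.restrict_apply' measurableSet_ball.compl] at h2
    exact h2
  -- test ball inside the complement
  set ct : Rn n := c + (2*R) • (EuclideanSpace.single (⟨0, hn⟩ : Fin n) (1:ℝ)) with hct'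
  have hdct : dist c ct = 2*R := by
    rw [hct', dist_self_add_right, norm_smul, EuclideanSpace.norm_single, norm_one, mul_one,
      Real.norm_eq_abs, abs_of_pos (by linarith)]
  have hsub : ball ct (R/2) ⊆ (ball c R)ᶜ := by
    intro y hy
    rw [mem_ball] at hy
    simp only [mem_compl_iff, mem_ball, not_lt]
    have h4 : dist c ct ≤ dist c y + dist y ct := dist_triangle c y ct
    rw [hdct] at h4
    rw [dist_comm]
    linarith
  have h2 : volume ({y | g y ≠ 0} ∩ ball ct (R/2)) = 0 :=
    measure_mono_null (inter_subset_inter_right _ hsub) h1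
  have h3 : volume ({y | ¬ (0 < v j y ∧ v j y < ∞)} ∩ ball ct (R/2)) = 0 :=
    measure_mono_null (inter_subset_left) (by
      have := hvj.2.1
      rw [ae_iff] at this
      exact this)
  have hcover : ball ct (R/2) ⊆
      ({y | g y ≠ 0} ∩ ball ct (R/2)) ∪ ({y | ¬ (0 < v j y ∧ v j y < ∞)} ∩ ball ct (R/2)) := by
    intro y hy
    by_cases hvy : 0 < v j y ∧ v j y < ∞
    · left
      refine ⟨?_, hy⟩
      have hvinv : (v j y)⁻¹ ≠ 0 := ENNReal.inv_ne_zero.mpr hvy.2.ne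
      have hyne : y ≠ c := by
        intro h
        subst h
        rw [mem_ball] at hy
        rw [hdct] at hy
        linarith
      have hedist0 : edist c y ≠ 0 := by
        simp only [ne_eq, edist_eq_zero]
        exact fun h => hyne h.symm
      have hedistt : edist c y ≠ ∞ := edist_ne_top _ _
      exact mul_ne_zero hvinv (rpow_ne_zero' hedist0 hedistt _)
    · exact Or.inr ⟨hvy, hy⟩
  have : volume (ball ct (R/2)) = 0 :=
    measure_mono_null hcover ((measure_union_null h2 h3))
  exact absurd this (measure_ball_pos _ _ (by linarith)).ne'

end AuxGIL


lemma key_bound (n m : ℕ) (hn : 1 ≤ n) (δ : ℝ) (β : Fin m → ℝ)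
    (p : Fin m → ℝ≥0∞) (v : Fin m → Rn n → ℝ≥0∞) (i : Fin m) (hpi : 1 ≤ p i)
    (hvi : IsWeight n (v i))
    (hRHinf : p i = 1 → MemRHinf n fun x => (v i x)⁻¹)
    (hdoub : 1 < p i → Doubling n fun x => (v i x)⁻¹ ^ conjR (p i)) :
    ∃ D : ℝ≥0∞, D ≠ ∞ ∧ ∀ (c z : Rn n) (R : ℝ), 0 < R → dist c z = 3*R/2 →
      ((if p i = 1 then essSup (fun x => (v i x)⁻¹) (volume.restrict (ball c R))
        else ((volume (ball c R))⁻¹ * ∫⁻ x in ball c R, (v i x)⁻¹ ^ conjR (p i)) ^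
          (conjR (p i))⁻¹) ≤
        D * volume (ball c R) ^
            (((n:ℝ) - β i + δ / (m:ℝ)) / (n:ℝ) - (1 - ((p i)⁻¹).toReal)) *
          GlobalFactor n m δ β p v c R i) ∨
      (p i = 1 ∧
        essSup (fun x => (v i x)⁻¹) (volume.restrict (ball z (4*R))) = ∞) := by
  classical
  set e : ℝ := (n:ℝ) - β i + δ / (m:ℝ) with he
  set κ := volume (ball (0 : Rn n) 1) with hκ
  have hκ0 : κ ≠ 0 := (measure_ball_pos _ _ one_pos).ne'
  have hκt : κ ≠ ∞ := measure_ball_lt_top.ne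
  set M : ℝ≥0∞ := 1 + (2:ℝ≥0∞) ^ e with hM
  have hMt : M ≠ ∞ := by
    rw [hM]
    exact ENNReal.add_ne_top.mpr ⟨ENNReal.one_ne_top, rpow_ne_top' (by norm_num) (by norm_num) e⟩
  have hκpow : κ ^ (-(e / (n:ℝ))) ≠ ∞ := rpow_ne_top' hκ0 hκt _
  -- common geometric facts, given c z R
  have geo : ∀ (c z : Rn n) (R : ℝ), 0 < R → dist c z = 3*R/2 → ∀ s : ℝ, s ≤ R/2 →
      ∀ y ∈ ball z s, (ENNReal.ofReal R ≤ edist c y ∧ edist c y ≤ 2 * ENNReal.ofReal R) ∧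
        y ∈ (ball c R)ᶜ := by
    intro c z R hR hz s hs y hy
    rw [mem_ball] at hy
    have h1 : dist c z ≤ dist c y + dist y z := dist_triangle c y z
    have h2 : dist c y ≤ dist c z + dist z y := dist_triangle c z y
    rw [hz] at h1 h2
    have hzy : dist z y = dist y z := dist_comm z y
    have hge : R ≤ dist c y := by linarith
    have hle : dist c y ≤ 2*R := by linarith
    refine ⟨⟨?_, ?_⟩, ?_⟩
    · rw [edist_dist]; exact ENNReal.ofReal_le_ofReal hge
    · rw [edist_dist, show (2:ℝ≥0∞) * ENNReal.ofReal R = ENNReal.ofReal (2*R) by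
        rw [ENNReal.ofReal_mul (by norm_num)]; norm_num]
      exact ENNReal.ofReal_le_ofReal hle
    · simp only [mem_compl_iff, mem_ball, not_lt, dist_comm y c]
      exact hge
  have hballsub : ∀ (c z : Rn n) (R : ℝ), 0 < R → dist c z = 3*R/2 →
      ball c R ⊆ ball z (4*R) := by
    intro c z R hR hz y hy
    rw [mem_ball] at hy ⊢
    have h1 : dist y z ≤ dist y c + dist c z := dist_triangle y c z
    rw [hz] at h1
    linarith
  rcases eq_or_lt_of_le hpi with hp1 | hpgt
  · -- case p i = 1
    have hp1' : p i = 1 := hp1.symm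
    obtain ⟨Crh, hCrh, hRH⟩ := hRHinf hp1'
    obtain ⟨K, hK, hshrink⟩ := rh_shrink hn (fun x => (v i x)⁻¹) Crh hCrh hRH
    refine ⟨K * M * κ ^ (-(e / (n:ℝ))), by
      exact ENNReal.mul_ne_top (ENNReal.mul_ne_top hK hMt) hκpow, ?_⟩
    intro c z R hR hz
    by_cases hfin : essSup (fun x => (v i x)⁻¹) (volume.restrict (ball z (4*R))) = ∞
    · exact Or.inr ⟨hp1', hfin⟩
    left
    rw [if_pos hp1']
    have hconj : conjE (p i) = ∞ := by rw [hp1']; exact conjE_one_eq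
    have hGdef : GlobalFactor n m δ β p v c R i =
        essSup (fun y => (v i y)⁻¹ * edist c y ^ (-e)) (volume.restrict (ball c R)ᶜ) := by
      rw [GlobalFactor, LpNormE, if_pos hconj]
    have hER0 : ENNReal.ofReal R ≠ 0 := (ENNReal.ofReal_pos.mpr hR).ne'
    -- chain from ball c R into ball z (R/8)
    have step1 : essSup (fun x => (v i x)⁻¹) (volume.restrict (ball c R)) ≤
        K * essSup (fun x => (v i x)⁻¹) (volume.restrict (ball z (R/8))) := by
      refine le_trans (essSup_restrict_mono _ _ (hballsub c z R hR hz)) ?_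
      have := hshrink z (4*R) (by linarith) hfin
      rw [show (4*R)/32 = R/8 by ring] at this
      exact this
    -- pointwise bound on ball z (R/8)
    have step2 : essSup (fun x => (v i x)⁻¹) (volume.restrict (ball z (R/8))) ≤
        (M * ENNReal.ofReal R ^ e) *
          essSup (fun y => (v i y)⁻¹ * edist c y ^ (-e)) (volume.restrict (ball z (R/8))) := by
      rw [← ENNReal.essSup_const_mul]
      refine essSup_mono_ae ((ae_restrict_iff' measurableSet_ball).mpr (ae_of_all _ ?_))
      intro y hy
      obtain ⟨⟨hd1, hd2⟩, _⟩ := geo c z R hR hz (R/8) (by linarith) y hy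
      have hx0 : edist c y ≠ 0 := fun h => hER0 (le_antisymm (h ▸ hd1) zero_le)
      have hone := one_le_mul_rpow e hER0 hx0 (edist_ne_top _ _) hd1 hd2
      calc (v i y)⁻¹ = (v i y)⁻¹ * 1 := (mul_one _).symm
      _ ≤ (v i y)⁻¹ * ((M * ENNReal.ofReal R ^ e) * edist c y ^ (-e)) :=
          mul_le_mul_right hone _
      _ = M * ENNReal.ofReal R ^ e * ((v i y)⁻¹ * edist c y ^ (-e)) := by ring
    have step3 : essSup (fun y => (v i y)⁻¹ * edist c y ^ (-e))
          (volume.restrict (ball z (R/8))) ≤ GlobalFactor n m δ β p v c R i := by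
      rw [hGdef]
      exact essSup_restrict_mono _ _ (fun y hy => (geo c z R hR hz (R/8) (by linarith) y hy).2)
    calc essSup (fun x => (v i x)⁻¹) (volume.restrict (ball c R))
        ≤ K * ((M * ENNReal.ofReal R ^ e) * GlobalFactor n m δ β p v c R i) := by
          refine step1.trans (mul_le_mul_right (step2.trans (mul_le_mul_right step3 _)) _)
      _ = K * M * κ ^ (-(e / (n:ℝ))) * volume (ball c R) ^
            (e / (n:ℝ) - (1 - ((p i)⁻¹).toReal)) * GlobalFactor n m δ β p v c R i := by
          rw [hp1']
          simp only [inv_one, ENNReal.toReal_one, sub_self, sub_zero]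
          rw [vol_ball_rpow hn c hR e]
          ring
  · -- case 1 < p i
    obtain ⟨Cd, hCd, hDoub⟩ := hdoub hpgt
    obtain ⟨hce, hct, hc1⟩ := conj_facts hpgt
    set q' := conjR (p i) with hq'
    have hq'pos : 0 < q' := lt_of_lt_of_le one_pos hc1
    refine ⟨(Cd ^ 3) ^ q'⁻¹ * M * κ ^ (-(e / (n:ℝ))), by
      refine ENNReal.mul_ne_top (ENNReal.mul_ne_top ?_ hMt) hκpow
      exact ENNReal.rpow_ne_top_of_nonneg (by positivity) (ENNReal.pow_ne_top hCd), ?_⟩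
    intro c z R hR hz
    left
    have hpne1 : p i ≠ 1 := fun h => absurd (h ▸ hpgt) (lt_irrefl _)
    rw [if_neg hpne1]
    have hGdef : GlobalFactor n m δ β p v c R i =
        (∫⁻ y, ((v i y)⁻¹ * edist c y ^ (-e)) ^ q' ∂(volume.restrict (ball c R)ᶜ)) ^
          (1 / q') := by
      rw [GlobalFactor, LpNormE, if_neg hce, hct]
    have hER0 : ENNReal.ofReal R ≠ 0 := (ENNReal.ofReal_pos.mpr hR).ne'
    set VB := volume (ball c R) with hVB
    have hVB0 : VB ≠ 0 := (measure_ball_pos _ _ hR).ne'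
    have hVBt : VB ≠ ∞ := measure_ball_lt_top.ne
    set u : Rn n → ℝ≥0∞ := fun x => (v i x)⁻¹ ^ q' with hu
    set g : Rn n → ℝ≥0∞ := fun y => (v i y)⁻¹ * edist c y ^ (-e) with hgdef
    set I := ∫⁻ y, g y ^ q' ∂(volume.restrict (ball c R)ᶜ) with hI
    -- integral chain
    have stepA : ∫⁻ x in ball c R, u x ≤ Cd ^ 3 * ∫⁻ x in ball z (R/2), u x := by
      refine le_trans (lintegral_mono_set (hballsub c z R hR hz)) ?_
      exact doub3 u Cd hDoub z hR
    have stepB : ∫⁻ x in ball z (R/2), u x ≤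
        (M * ENNReal.ofReal R ^ e) ^ q' * ∫⁻ y in ball z (R/2), g y ^ q' := by
      rw [← lintegral_const_mul' _ _ (by
        exact ENNReal.rpow_ne_top_of_nonneg hq'pos.le
          (ENNReal.mul_ne_top hMt (rpow_ne_top' hER0 ENNReal.ofReal_ne_top e)))]
      refine lintegral_mono_ae ((ae_restrict_iff' measurableSet_ball).mpr (ae_of_all _ ?_))
      intro y hy
      obtain ⟨⟨hd1, hd2⟩, _⟩ := geo c z R hR hz (R/2) (by linarith) y hy
      have hx0 : edist c y ≠ 0 := fun h => hER0 (le_antisymm (h ▸ hd1) zero_le)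
      have hone := one_le_mul_rpow e hER0 hx0 (edist_ne_top _ _) hd1 hd2
      have hbase : (v i y)⁻¹ ≤ (M * ENNReal.ofReal R ^ e) * g y := by
        calc (v i y)⁻¹ = (v i y)⁻¹ * 1 := (mul_one _).symm
        _ ≤ (v i y)⁻¹ * ((M * ENNReal.ofReal R ^ e) * edist c y ^ (-e)) :=
            mul_le_mul_right hone _
        _ = (M * ENNReal.ofReal R ^ e) * ((v i y)⁻¹ * edist c y ^ (-e)) := by ring
      calc u y = ((v i y)⁻¹) ^ q' := rfl
      _ ≤ ((M * ENNReal.ofReal R ^ e) * g y) ^ q' := ENNReal.rpow_le_rpow hbase hq'pos.le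
      _ = (M * ENNReal.ofReal R ^ e) ^ q' * g y ^ q' :=
          ENNReal.mul_rpow_of_nonneg _ _ hq'pos.le
    have stepC : ∫⁻ y in ball z (R/2), g y ^ q' ≤ I := by
      rw [hI]
      exact lintegral_mono' (Measure.restrict_mono
        (fun y hy => (geo c z R hR hz (R/2) (by linarith) y hy).2) le_rfl) le_rfl
    have hq'ne : q' ≠ 0 := hq'pos.ne'
    have key : ((VB)⁻¹ * ∫⁻ x in ball c R, u x) ^ q'⁻¹ ≤
        (Cd ^ 3) ^ q'⁻¹ * (M * ENNReal.ofReal R ^ e) * (VB ^ (-(q'⁻¹ : ℝ))) * I ^ (1/q') := by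
      have hchain : (VB)⁻¹ * ∫⁻ x in ball c R, u x ≤
          VB⁻¹ * (Cd ^ 3 * ((M * ENNReal.ofReal R ^ e) ^ q' * I)) := by
        refine mul_le_mul_right ?_ _
        refine stepA.trans (mul_le_mul_right (stepB.trans (mul_le_mul_right stepC _)) _)
      refine le_trans (ENNReal.rpow_le_rpow hchain (by positivity)) ?_
      rw [show VB⁻¹ * (Cd ^ 3 * ((M * ENNReal.ofReal R ^ e) ^ q' * I)) =
          Cd ^ 3 * ((M * ENNReal.ofReal R ^ e) ^ q' * (VB⁻¹ * I)) by ring]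
      rw [ENNReal.mul_rpow_of_nonneg _ _ (by positivity : (0:ℝ) ≤ q'⁻¹),
        ENNReal.mul_rpow_of_nonneg _ _ (by positivity : (0:ℝ) ≤ q'⁻¹),
        ENNReal.mul_rpow_of_nonneg _ _ (by positivity : (0:ℝ) ≤ q'⁻¹),
        ← ENNReal.rpow_mul (M * ENNReal.ofReal R ^ e) q' q'⁻¹,
        mul_inv_cancel₀ hq'ne, ENNReal.rpow_one, ENNReal.inv_rpow, ← ENNReal.rpow_neg,
        one_div]
      ring_nf
      exact le_rfl
    calc ((VB)⁻¹ * ∫⁻ x in ball c R, u x) ^ q'⁻¹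
        ≤ (Cd ^ 3) ^ q'⁻¹ * (M * ENNReal.ofReal R ^ e) * (VB ^ (-(q'⁻¹ : ℝ))) * I ^ (1/q') :=
          key
      _ = (Cd ^ 3) ^ q'⁻¹ * M * κ ^ (-(e / (n:ℝ))) *
            VB ^ (e / (n:ℝ) - (1 - ((p i)⁻¹).toReal)) * GlobalFactor n m δ β p v c R i := by
          rw [hGdef, vol_ball_rpow hn c hR e, ← hκ, ← hVB]
          rw [show e / (n:ℝ) - (1 - ((p i)⁻¹).toReal) = e / (n:ℝ) + (-(q'⁻¹)) by
            rw [conjR_inv_eq hpgt]; ring]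
          rw [ENNReal.rpow_add _ _ hVB0 hVBt]
          ring

/-- Corollary 6.2: under the hypotheses of Lemma 6.1, the global condition implies
the local condition. -/
theorem global_implies_local
    (n m : ℕ) (hn : 1 ≤ n) (hm : 1 ≤ m) (δ δt : ℝ)
    (β : Fin m → ℝ) (hβ : ∀ i, 0 < β i ∧ β i < n)
    (p : Fin m → ℝ≥0∞) (hp : ∀ i, 1 ≤ p i)
    (w : Rn n → ℝ≥0∞) (v : Fin m → Rn n → ℝ≥0∞)
    (hw : IsWeight n w) (hv : ∀ i, IsWeight n (v i))
    (hRHinf : ∀ i, p i = 1 → MemRHinf n fun x => (v i x)⁻¹)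
    (hdoub : ∀ i, 1 < p i → Doubling n fun x => (v i x)⁻¹ ^ conjR (p i))
    (hglob : GlobalCond n m δ δt β p w v) :
    LocalCond n m δt (∑ i, β i) p w v := by
  classical
  obtain ⟨Cg, hCg, hGlob⟩ := hglob
  have hwmeas := hw.1
  have hkey := fun i => key_bound n m hn δ β p v i (hp i) (hv i) (hRHinf i) (hdoub i)
  choose D hDne hD using hkey
  refine ⟨(∏ i, D i) * Cg, ?_, ?_⟩
  · exact ENNReal.mul_ne_top
      (ENNReal.prod_lt_top (fun i _ => lt_top_iff_ne_top.mpr (hDne i))).ne hCg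
  intro c R hR
  set E1 : Rn n := EuclideanSpace.single (⟨0, hn⟩ : Fin n) (1:ℝ) with hE1
  set z : Rn n := c + (3*R/2) • E1 with hzdef
  have hz : dist c z = 3*R/2 := by
    rw [hzdef, dist_self_add_right, norm_smul, hE1, EuclideanSpace.norm_single, norm_one,
      mul_one, Real.norm_eq_abs, abs_of_pos (by linarith)]
  by_cases hbad : ∃ i, p i = 1 ∧
      essSup (fun x => (v i x)⁻¹) (volume.restrict (ball z (4*R))) = ∞
  · -- degenerate case : w vanishes a.e. on ball c R
    obtain ⟨i, hpi1, hSinf⟩ := hbad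
    obtain ⟨z₀, hz₀mem, hz₀⟩ :=
      exists_bad_point (fun x => (v i x)⁻¹) ((hv i).1.inv) z hSinf
    set e : ℝ := (n:ℝ) - β i + δ / (m:ℝ) with he
    have hwzero : ∀ (q : Rn n) (r : ℝ), 0 < r → r < dist q z₀ →
        volume ({x | w x ≠ 0} ∩ ball q r) = 0 := by
      intro q r hr hrd
      have hGq := hGlob q r hr
      have hGi : GlobalFactor n m δ β p v q r i = ∞ := by
        set d := dist q z₀ with hd
        set ρ' := (d - r)/2 with hρ'
        have hρpos : 0 < ρ' := by rw [hρ']; linarith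
        have hdpos : 0 < d := lt_trans hr hrd
        have hsub : ball z₀ ρ' ⊆ (ball q r)ᶜ := by
          intro y hy
          rw [mem_ball] at hy
          simp only [mem_compl_iff, mem_ball, not_lt]
          have h4 : d ≤ dist q y + dist y z₀ := dist_triangle q y z₀
          rw [dist_comm]
          have : dist y z₀ < ρ' := hy
          rw [hρ'] at this
          linarith
        have hedist : ∀ y ∈ ball z₀ ρ',
            ENNReal.ofReal ((d+r)/2) ≤ edist q y ∧ edist q y ≤ ENNReal.ofReal (d + ρ') := by
          intro y hy
          rw [mem_ball] at hy
          have h4 : d ≤ dist q y + dist y z₀ := dist_triangle q y z₀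
          have h5 : dist q y ≤ d + dist z₀ y := dist_triangle q z₀ y
          rw [dist_comm z₀ y] at h5
          constructor
          · rw [edist_dist]
            refine ENNReal.ofReal_le_ofReal ?_
            rw [hρ'] at hy; linarith
          · rw [edist_dist]
            exact ENNReal.ofReal_le_ofReal (by linarith)
        set mq := min (ENNReal.ofReal ((d+r)/2) ^ (-e)) (ENNReal.ofReal (d + ρ') ^ (-e))
          with hmq
        have hmq0 : mq ≠ 0 := by
          rw [hmq]
          have h1 := rpow_ne_zero' (x := ENNReal.ofReal ((d+r)/2))
            (ENNReal.ofReal_pos.mpr (by linarith)).ne' ENNReal.ofReal_ne_top (-e)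
          have h2 := rpow_ne_zero' (x := ENNReal.ofReal (d + ρ'))
            (ENNReal.ofReal_pos.mpr (by linarith)).ne' ENNReal.ofReal_ne_top (-e)
          intro h
          rcases min_eq_iff.mp h with ⟨h', _⟩ | ⟨h', _⟩
          exacts [h1 h', h2 h']
        have hconj : conjE (p i) = ∞ := by rw [hpi1]; exact conjE_one_eq
        have hGieq : GlobalFactor n m δ β p v q r i =
            essSup (fun y => (v i y)⁻¹ * edist q y ^ (-e)) (volume.restrict (ball q r)ᶜ) := by
          rw [GlobalFactor, LpNormE, if_pos hconj]
        rw [hGieq, ← top_le_iff]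
        calc (⊤:ℝ≥0∞) = mq * ⊤ := (ENNReal.mul_top hmq0).symm
        _ = mq * essSup (fun x => (v i x)⁻¹) (volume.restrict (ball z₀ ρ')) := by
            rw [hz₀ ρ' hρpos]
        _ = essSup (fun x => mq * (v i x)⁻¹) (volume.restrict (ball z₀ ρ')) :=
            ENNReal.essSup_const_mul.symm
        _ ≤ essSup (fun y => (v i y)⁻¹ * edist q y ^ (-e))
              (volume.restrict (ball z₀ ρ')) := by
            refine essSup_mono_ae ((ae_restrict_iff' measurableSet_ball).mpr (ae_of_all _ ?_))
            intro y hy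
            obtain ⟨hd1, hd2⟩ := hedist y hy
            have hmin : mq ≤ edist q y ^ (-e) := rpow_min_le (-e) hd1 hd2
            calc mq * (v i y)⁻¹ ≤ edist q y ^ (-e) * (v i y)⁻¹ := mul_le_mul_left hmin _
            _ = (v i y)⁻¹ * edist q y ^ (-e) := mul_comm _ _
        _ ≤ essSup (fun y => (v i y)⁻¹ * edist q y ^ (-e))
              (volume.restrict (ball q r)ᶜ) := essSup_restrict_mono _ _ hsub
      have hprodtop : (∏ j, GlobalFactor n m δ β p v q r j) = ∞ := by
        rw [← Finset.mul_prod_erase Finset.univ _ (Finset.mem_univ i), hGi, ENNReal.top_mul]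
        exact Finset.prod_ne_zero_iff.mpr fun j _ =>
          glob_factor_ne_zero n m hn δ β p v j (hp j) (hv j) q hr
      rw [hprodtop] at hGq
      have hEW : essSup w (volume.restrict (ball q r)) = 0 := by
        by_contra hne
        have hvol0 : volume (ball q r) ≠ 0 := (measure_ball_pos _ _ hr).ne'
        have hvolt : volume (ball q r) ≠ ∞ := measure_ball_lt_top.ne
        have hd0 : essSup w (volume.restrict (ball q r)) /
            volume (ball q r) ^ ((δt - δ)/(n:ℝ)) ≠ 0 := by
          rw [div_eq_mul_inv]
          exact mul_ne_zero hne (ENNReal.inv_ne_zero.mpr (rpow_ne_top' hvol0 hvolt _))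
        rw [ENNReal.mul_top hd0] at hGq
        exact hCg (top_le_iff.mp hGq)
      rw [ENNReal.essSup_eq_zero_iff] at hEW
      have h2 := ae_iff.mp hEW
      rw [Measure.restrict_apply' measurableSet_ball] at h2
      exact h2
    have h0 : volume ({x | w x ≠ 0} ∩ ball c R) = 0 := ae_zero_on_ball hn w z₀ hwzero c R
    have hzero : essSup w (volume.restrict (ball c R)) = 0 := by
      rw [ENNReal.essSup_eq_zero_iff, Filter.EventuallyEq, ae_iff,
        Measure.restrict_apply' measurableSet_ball]
      exact h0
    rw [hzero, ENNReal.zero_div, zero_mul]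
    exact zero_le
  · push_neg at hbad
    set VB := volume (ball c R) with hVB
    have hVB0 : VB ≠ 0 := (measure_ball_pos _ _ hR).ne'
    have hVBt : VB ≠ ∞ := measure_ball_lt_top.ne
    set θ : Fin m → ℝ :=
      fun i => ((n:ℝ) - β i + δ/(m:ℝ))/(n:ℝ) - (1 - ((p i)⁻¹).toReal) with hθ
    have hLi : ∀ i ∈ Finset.univ,
        (if p i = 1 then essSup (fun x => (v i x)⁻¹) (volume.restrict (ball c R))
          else ((VB)⁻¹ * ∫⁻ x in ball c R, (v i x)⁻¹ ^ conjR (p i)) ^ (conjR (p i))⁻¹)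
        ≤ D i * VB ^ θ i * GlobalFactor n m δ β p v c R i := by
      intro i _
      rcases hD i c z R hR hz with h | ⟨hpi1, hbadi⟩
      · exact h
      · exact absurd hbadi (hbad i hpi1)
    have hprod : (∏ i, (if p i = 1 then
          essSup (fun x => (v i x)⁻¹) (volume.restrict (ball c R))
          else ((VB)⁻¹ * ∫⁻ x in ball c R, (v i x)⁻¹ ^ conjR (p i)) ^ (conjR (p i))⁻¹)) ≤
        (∏ i, D i) * VB ^ (∑ i, θ i) * ∏ i, GlobalFactor n m δ β p v c R i := by
      calc (∏ i, (if p i = 1 then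
            essSup (fun x => (v i x)⁻¹) (volume.restrict (ball c R))
            else ((VB)⁻¹ * ∫⁻ x in ball c R, (v i x)⁻¹ ^ conjR (p i)) ^ (conjR (p i))⁻¹))
          ≤ ∏ i, (D i * VB ^ θ i * GlobalFactor n m δ β p v c R i) :=
            Finset.prod_le_prod' hLi
        _ = (∏ i, D i) * (∏ i, VB ^ θ i) * ∏ i, GlobalFactor n m δ β p v c R i := by
            rw [Finset.prod_mul_distrib, Finset.prod_mul_distrib]
        _ = (∏ i, D i) * VB ^ (∑ i, θ i) * ∏ i, GlobalFactor n m δ β p v c R i := by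
            rw [prod_rpow_sum VB hVB0 hVBt θ]
    have hm0 : ((m:ℝ)) ≠ 0 := Nat.cast_ne_zero.mpr (by omega)
    have hn0 : ((n:ℝ)) ≠ 0 := Nat.cast_ne_zero.mpr (by omega)
    have hsumθ : -(δt/(n:ℝ) + (∑ i, (p i)⁻¹).toReal - (∑ i, β i)/(n:ℝ)) + (∑ i, θ i)
        = -((δt - δ)/(n:ℝ)) := by
      have htR : (∑ i, (p i)⁻¹).toReal = ∑ i, ((p i)⁻¹).toReal :=
        ENNReal.toReal_sum (fun i _ =>
          ENNReal.inv_ne_top.mpr (lt_of_lt_of_le one_pos (hp i)).ne')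
      have hA : (∑ i, θ i) =
          ((m:ℝ)*(n:ℝ) - (∑ i, β i) + δ)/(n:ℝ) - ((m:ℝ) - ∑ i, ((p i)⁻¹).toReal) := by
        rw [hθ, Finset.sum_sub_distrib]
        congr 1
        · rw [← Finset.sum_div]
          congr 1
          rw [Finset.sum_add_distrib, Finset.sum_sub_distrib, Finset.sum_const,
            Finset.card_univ, Fintype.card_fin, nsmul_eq_mul, Finset.sum_const,
            Finset.card_univ, Fintype.card_fin, nsmul_eq_mul]
          field_simp
        · rw [Finset.sum_sub_distrib, Finset.sum_const, Finset.card_univ,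
            Fintype.card_fin, nsmul_eq_mul, mul_one]
      rw [htR, hA]
      field_simp
      ring
    have hcomb : VB ^ (-(δt/(n:ℝ) + (∑ i, (p i)⁻¹).toReal - (∑ i, β i)/(n:ℝ))) *
        VB ^ (∑ i, θ i) = VB ^ (-((δt - δ)/(n:ℝ))) := by
      rw [← ENNReal.rpow_add _ _ hVB0 hVBt, hsumθ]
    calc essSup w (volume.restrict (ball c R)) /
          VB ^ (δt/(n:ℝ) + (∑ i, (p i)⁻¹).toReal - (∑ i, β i)/(n:ℝ)) *
        ∏ i, (if p i = 1 then essSup (fun x => (v i x)⁻¹) (volume.restrict (ball c R))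
          else ((VB)⁻¹ * ∫⁻ x in ball c R, (v i x)⁻¹ ^ conjR (p i)) ^ (conjR (p i))⁻¹)
        ≤ essSup w (volume.restrict (ball c R)) /
            VB ^ (δt/(n:ℝ) + (∑ i, (p i)⁻¹).toReal - (∑ i, β i)/(n:ℝ)) *
          ((∏ i, D i) * VB ^ (∑ i, θ i) * ∏ i, GlobalFactor n m δ β p v c R i) :=
          mul_le_mul_right hprod _
      _ = (∏ i, D i) * (essSup w (volume.restrict (ball c R)) /
            VB ^ ((δt - δ)/(n:ℝ)) * ∏ i, GlobalFactor n m δ β p v c R i) := by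
          rw [ENNReal.div_eq_inv_mul, ENNReal.div_eq_inv_mul, ← ENNReal.rpow_neg,
            ← ENNReal.rpow_neg, ← hcomb]
          ring
      _ ≤ (∏ i, D i) * Cg := mul_le_mul_right (hGlob c R hR) _
end

section
/- Let n ≥ 1 and α > −n. There exist constants c, C > 0 depending only on n and α such that for every ball B = B(x_B, R) in ℝ^n: c R^n (max{R, |x_B|})^α ≤ ∫_B |x|^α dx ≤ C R^n (max{R, |x_B|})^α. -/
open MeasureTheory Metric Set
open scoped ENNReal NNReal BigOperators
open scoped Classical

open Module
lemma rpow_sandwich {α a b r y : ℝ} (ha : 0 < a) (hr : 0 < r)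
    (h1 : a * r ≤ y) (h2 : y ≤ b * r) :
    min (a ^ α) (b ^ α) * r ^ α ≤ y ^ α ∧ y ^ α ≤ max (a ^ α) (b ^ α) * r ^ α := by
  have hy : 0 < y := lt_of_lt_of_le (by positivity) h1
  have hyr : y = (y / r) * r := by field_simp
  have ht1 : a ≤ y / r := (le_div_iff₀ hr).2 h1
  have ht2 : y / r ≤ b := (div_le_iff₀ hr).2 h2
  have ht0 : 0 < y / r := lt_of_lt_of_le ha ht1
  have key : y ^ α = (y / r) ^ α * r ^ α := by
    rw [hyr, Real.mul_rpow ht0.le hr.le]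
    congr 1 <;> rw [← hyr]
  have hrn : (0:ℝ) ≤ r ^ α := Real.rpow_nonneg hr.le α
  rcases le_or_gt 0 α with hα | hα
  · refine ⟨?_, ?_⟩ <;> rw [key]
    · exact mul_le_mul_of_nonneg_right
        (min_le_of_left_le (Real.rpow_le_rpow ha.le ht1 hα)) hrn
    · exact mul_le_mul_of_nonneg_right
        (le_max_of_le_right (Real.rpow_le_rpow ht0.le ht2 hα)) hrn
  · refine ⟨?_, ?_⟩ <;> rw [key]
    · exact mul_le_mul_of_nonneg_right
        (min_le_of_right_le (Real.rpow_le_rpow_of_nonpos ht0 ht2 hα.le)) hrn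
    · exact mul_le_mul_of_nonneg_right
        (le_max_of_le_left (Real.rpow_le_rpow_of_nonpos ha ht1 hα.le)) hrn



lemma lint_finite (n : ℕ) (hn : 1 ≤ n) (α : ℝ) (hα : -(n : ℝ) < α) (r : ℝ) (hr : 0 < r) :
    ∫⁻ y in ball (0 : EuclideanSpace ℝ (Fin n)) r, ENNReal.ofReal (‖y‖ ^ α) < ∞ := by
  haveI : Nonempty (Fin n) := ⟨⟨0, hn⟩⟩
  haveI : Nontrivial (EuclideanSpace ℝ (Fin n)) := by
    refine nontrivial_of_ne (EuclideanSpace.single ⟨0, hn⟩ (1:ℝ)) 0 ?_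
    intro h
    have := congrArg (fun v => v ⟨0, hn⟩) h
    simp [EuclideanSpace.single_apply] at this
  rcases le_or_gt 0 α with hα0 | hα0
  · calc ∫⁻ y in ball (0 : EuclideanSpace ℝ (Fin n)) r, ENNReal.ofReal (‖y‖ ^ α)
        ≤ ∫⁻ _ in ball (0 : EuclideanSpace ℝ (Fin n)) r, ENNReal.ofReal (r ^ α) := by
          refine setLIntegral_mono' measurableSet_ball fun y hy => ?_
          exact ENNReal.ofReal_le_ofReal
            (Real.rpow_le_rpow (norm_nonneg _) (le_of_lt (mem_ball_zero_iff.1 hy)) hα0)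
      _ = ENNReal.ofReal (r ^ α) * volume (ball (0 : EuclideanSpace ℝ (Fin n)) r) :=
          setLIntegral_const _ _
      _ < ∞ := ENNReal.mul_lt_top ENNReal.ofReal_lt_top measure_ball_lt_top
  · have hαne : α ≠ 0 := hα0.ne
    have hf_nn : 0 ≤ᵐ[volume.restrict (ball (0 : EuclideanSpace ℝ (Fin n)) r)]
        fun y => ‖y‖ ^ α := Filter.Eventually.of_forall fun y => Real.rpow_nonneg (norm_nonneg _) _
    have hf_m : AEMeasurable (fun y : EuclideanSpace ℝ (Fin n) => ‖y‖ ^ α)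
        (volume.restrict (ball (0 : EuclideanSpace ℝ (Fin n)) r)) :=
      (measurable_norm.pow_const α).aemeasurable
    rw [lintegral_eq_lintegral_meas_le _ hf_nn hf_m]
    have hrα : 0 < r ^ α := Real.rpow_pos_of_pos hr α
    set ν := volume.restrict (ball (0 : EuclideanSpace ℝ (Fin n)) r) with hν
    calc ∫⁻ t in Ioi 0, ν {a | t ≤ ‖a‖ ^ α}
        ≤ ∫⁻ t in Ioc 0 (r ^ α) ∪ Ioi (r ^ α), ν {a | t ≤ ‖a‖ ^ α} :=
          lintegral_mono_set (by rw [Ioc_union_Ioi_eq_Ioi hrα.le])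
      _ ≤ (∫⁻ t in Ioc 0 (r ^ α), ν {a | t ≤ ‖a‖ ^ α})
            + ∫⁻ t in Ioi (r ^ α), ν {a | t ≤ ‖a‖ ^ α} := lintegral_union_le _ _ _
      _ < ∞ := by
          refine ENNReal.add_lt_top.2 ⟨?_, ?_⟩
          · calc ∫⁻ t in Ioc 0 (r ^ α), ν {a | t ≤ ‖a‖ ^ α}
                ≤ ∫⁻ _ in Ioc 0 (r ^ α), volume (ball (0 : EuclideanSpace ℝ (Fin n)) r) := by
                  refine setLIntegral_mono' measurableSet_Ioc fun t _ => ?_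
                  rw [hν, Measure.restrict_apply' measurableSet_ball]
                  exact measure_mono inter_subset_right
              _ = volume (ball (0 : EuclideanSpace ℝ (Fin n)) r) * volume (Ioc 0 (r ^ α)) :=
                  setLIntegral_const _ _
              _ < ∞ := ENNReal.mul_lt_top measure_ball_lt_top (by simp [hrα.le])
          · have key : ∀ t ∈ Ioi (r ^ α), ν {a | t ≤ ‖a‖ ^ α}
                ≤ ENNReal.ofReal (t ^ (α⁻¹ * n)) * volume (ball (0 : EuclideanSpace ℝ (Fin n)) 1) := by
              intro t ht
              have ht0 : 0 < t := lt_trans hrα ht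
              have hsub : {a : EuclideanSpace ℝ (Fin n) | t ≤ ‖a‖ ^ α}
                  ⊆ closedBall 0 (t ^ α⁻¹) := by
                intro a ha
                simp only [mem_setOf_eq] at ha
                have hane : a ≠ 0 := by
                  intro h0
                  rw [h0, norm_zero, Real.zero_rpow hαne] at ha
                  exact absurd ha (not_le.2 ht0)
                have hna : 0 < ‖a‖ := norm_pos_iff.2 hane
                have h1 : (‖a‖ ^ α) ^ α⁻¹ ≤ t ^ α⁻¹ :=
                  Real.rpow_le_rpow_of_nonpos ht0 ha (inv_nonpos.2 hα0.le)
                rw [Real.rpow_rpow_inv (norm_nonneg _) hαne] at h1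
                exact mem_closedBall_zero_iff.2 h1
              calc ν {a | t ≤ ‖a‖ ^ α} ≤ volume (closedBall (0 : EuclideanSpace ℝ (Fin n)) (t ^ α⁻¹)) := by
                    rw [hν, Measure.restrict_apply' measurableSet_ball]
                    exact measure_mono (inter_subset_left.trans hsub)
                _ = ENNReal.ofReal ((t ^ α⁻¹) ^ finrank ℝ (EuclideanSpace ℝ (Fin n)))
                      * volume (ball (0 : EuclideanSpace ℝ (Fin n)) 1) :=
                    Measure.addHaar_closedBall _ _ (Real.rpow_nonneg ht0.le _)
                _ = ENNReal.ofReal (t ^ (α⁻¹ * n)) * volume (ball (0 : EuclideanSpace ℝ (Fin n)) 1) := by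
                    rw [finrank_euclideanSpace_fin, ← Real.rpow_natCast (t ^ α⁻¹) n,
                      ← Real.rpow_mul ht0.le]
            calc ∫⁻ t in Ioi (r ^ α), ν {a | t ≤ ‖a‖ ^ α}
                ≤ ∫⁻ t in Ioi (r ^ α), ENNReal.ofReal (t ^ (α⁻¹ * n))
                    * volume (ball (0 : EuclideanSpace ℝ (Fin n)) 1) :=
                  setLIntegral_mono' measurableSet_Ioi key
              _ = (∫⁻ t in Ioi (r ^ α), ENNReal.ofReal (t ^ (α⁻¹ * n)))
                    * volume (ball (0 : EuclideanSpace ℝ (Fin n)) 1) :=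
                  lintegral_mul_const' _ _ measure_ball_lt_top.ne
              _ < ∞ := by
                  refine ENNReal.mul_lt_top ?_ measure_ball_lt_top
                  have hexp : α⁻¹ * n < -1 := by
                    rw [inv_mul_eq_div, div_lt_iff_of_neg hα0]
                    linarith
                  exact (integrableOn_Ioi_rpow_of_lt hexp hrα).setLIntegral_lt_top

section Aux
variable {n : ℕ} {α : ℝ}

lemma aux_nontrivial (hn : 1 ≤ n) : Nontrivial (EuclideanSpace ℝ (Fin n)) := by
  refine nontrivial_of_ne (EuclideanSpace.single ⟨0, hn⟩ (1:ℝ)) 0 ?_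
  intro h
  have := congrArg (fun v => v ⟨0, hn⟩) h
  simp [EuclideanSpace.single_apply] at this

lemma aux_intOn (hn : 1 ≤ n) (hα : -(n : ℝ) < α)
    (hfin : ∀ r : ℝ, 0 < r →
      ∫⁻ y in ball (0 : EuclideanSpace ℝ (Fin n)) r, ENNReal.ofReal (‖y‖ ^ α) < ∞)
    (x : EuclideanSpace ℝ (Fin n)) (R : ℝ) (hR : 0 < R) :
    IntegrableOn (fun y : EuclideanSpace ℝ (Fin n) => ‖y‖ ^ α) (ball x R) := by
  have hsub : ball x R ⊆ ball (0 : EuclideanSpace ℝ (Fin n)) (‖x‖ + R) := by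
    intro y hy
    rw [mem_ball_zero_iff]
    calc ‖y‖ ≤ ‖x‖ + ‖y - x‖ := norm_le_insert' y x
      _ < ‖x‖ + R := by
          have : dist y x < R := mem_ball.1 hy
          rw [dist_eq_norm] at this; linarith
  have hbig : IntegrableOn (fun y : EuclideanSpace ℝ (Fin n) => ‖y‖ ^ α)
      (ball (0 : EuclideanSpace ℝ (Fin n)) (‖x‖ + R)) := by
    refine ⟨(measurable_norm.pow_const α).aestronglyMeasurable, ?_⟩
    rw [hasFiniteIntegral_iff_ofReal]
    · exact hfin _ (by positivity)
    · exact Filter.Eventually.of_forall fun y => Real.rpow_nonneg (norm_nonneg _) _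
  exact hbig.mono_set hsub

lemma aux_scale (hn : 1 ≤ n) (s : ℝ) (hs : 0 < s) :
    ∫ y in ball (0 : EuclideanSpace ℝ (Fin n)) s, ‖y‖ ^ α
      = s ^ ((n : ℝ) + α) * ∫ y in ball (0 : EuclideanSpace ℝ (Fin n)) 1, ‖y‖ ^ α := by
  have h := MeasureTheory.Measure.setIntegral_comp_smul_of_pos volume
    (fun y : EuclideanSpace ℝ (Fin n) => ‖y‖ ^ α) (ball (0 : EuclideanSpace ℝ (Fin n)) 1) hs
  rw [smul_unitBall_of_pos hs] at h
  have hlhs : ∫ x in ball (0 : EuclideanSpace ℝ (Fin n)) 1, ‖s • x‖ ^ α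
      = s ^ α * ∫ y in ball (0 : EuclideanSpace ℝ (Fin n)) 1, ‖y‖ ^ α := by
    rw [← integral_const_mul]
    refine setIntegral_congr_fun measurableSet_ball fun y _ => ?_
    rw [norm_smul, Real.norm_eq_abs, abs_of_pos hs, Real.mul_rpow hs.le (norm_nonneg _)]
  rw [hlhs, finrank_euclideanSpace_fin, smul_eq_mul] at h
  have hsn : (0:ℝ) < s ^ n := by positivity
  have : s ^ ((n : ℝ) + α) = s ^ n * s ^ α := by
    rw [Real.rpow_add hs, Real.rpow_natCast]
  rw [this]
  field_simp at h ⊢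
  linarith [h]

lemma aux_volball (hn : 1 ≤ n) (x : EuclideanSpace ℝ (Fin n)) {R : ℝ} (hR : 0 < R) :
    (volume (ball x R)).toReal
      = R ^ n * (volume (ball (0 : EuclideanSpace ℝ (Fin n)) 1)).toReal := by
  haveI := aux_nontrivial hn
  rw [Measure.addHaar_ball volume x hR.le, ENNReal.toReal_mul,
    ENNReal.toReal_ofReal (by positivity), finrank_euclideanSpace_fin]

end Aux


set_option maxHeartbeats 1000000

/-- Lemma 6.7: for `α > -n`, `∫_{B(x_B,R)} |x|^α dx ≈ Rⁿ (max{R,|x_B|})^α`,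
with implicit constants depending only on `n` and `α`. -/
theorem integral_norm_rpow_ball
    (n : ℕ) (hn : 1 ≤ n) (α : ℝ) (hα : -(n : ℝ) < α) :
    ∃ c C : ℝ, 0 < c ∧ 0 < C ∧ ∀ (x : Rn n) (R : ℝ), 0 < R →
      c * R ^ (n : ℝ) * max R ‖x‖ ^ α ≤ (∫ y in ball x R, ‖y‖ ^ α) ∧
        (∫ y in ball x R, ‖y‖ ^ α) ≤ C * R ^ (n : ℝ) * max R ‖x‖ ^ α := by
  haveI := aux_nontrivial hn
  have hfin := lint_finite n hn α hα
  have hint := aux_intOn hn hα hfin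
  set ω := (volume (ball (0 : EuclideanSpace ℝ (Fin n)) 1)).toReal with hωdef
  have hω : 0 < ω :=
    ENNReal.toReal_pos (measure_ball_pos _ _ one_pos).ne' measure_ball_lt_top.ne
  set K := ∫ y in ball (0 : EuclideanSpace ℝ (Fin n)) 1, ‖y‖ ^ α with hKdef
  have hK0 : 0 ≤ K :=
    setIntegral_nonneg measurableSet_ball fun y _ => Real.rpow_nonneg (norm_nonneg _) _
  set m1 : ℝ := min ((4:ℝ)⁻¹ ^ α) ((3:ℝ) ^ α) with hm1def
  set m2 : ℝ := min ((2:ℝ)⁻¹ ^ α) (((3:ℝ)/2) ^ α) with hm2def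
  set M2 : ℝ := max ((2:ℝ)⁻¹ ^ α) (((3:ℝ)/2) ^ α) with hM2def
  set m3 : ℝ := min ((1:ℝ) ^ α) ((2:ℝ) ^ α) with hm3def
  set M3 : ℝ := max ((1:ℝ) ^ α) ((2:ℝ) ^ α) with hM3def
  have hm1 : 0 < m1 := lt_min (Real.rpow_pos_of_pos (by norm_num) _) (Real.rpow_pos_of_pos (by norm_num) _)
  have hm2 : 0 < m2 := lt_min (Real.rpow_pos_of_pos (by norm_num) _) (Real.rpow_pos_of_pos (by norm_num) _)
  have hM2 : 0 < M2 := lt_of_lt_of_le (Real.rpow_pos_of_pos (by norm_num) _) (le_max_left _ _)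
  have hm3 : 0 < m3 := lt_min (Real.rpow_pos_of_pos (by norm_num) _) (Real.rpow_pos_of_pos (by norm_num) _)
  have hM3 : 0 < M3 := lt_of_lt_of_le (Real.rpow_pos_of_pos (by norm_num) _) (le_max_left _ _)
  refine ⟨min (m2 * ω) (ω * (4:ℝ)⁻¹ ^ n * m1 * M3⁻¹),
    max (M2 * ω) ((3:ℝ) ^ ((n : ℝ) + α) * K * m3⁻¹), ?_, ?_, ?_⟩
  · exact lt_min (by positivity) (by positivity)
  · exact lt_of_lt_of_le (by positivity) (le_max_left _ _)
  intro x R hR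
  have hRn : R ^ (n : ℝ) = R ^ n := Real.rpow_natCast R n
  have hRnpos : (0:ℝ) < R ^ n := by positivity
  have hmaxpos : 0 < max R ‖x‖ := lt_of_lt_of_le hR (le_max_left _ _)
  have hmaxα : (0:ℝ) < max R ‖x‖ ^ α := Real.rpow_pos_of_pos hmaxpos _
  have hvol : (volume (ball x R)).toReal = R ^ n * ω := aux_volball hn x hR
  rcases le_or_gt (2 * R) ‖x‖ with hcase | hcase
  · -- far case
    have hx0 : 0 < ‖x‖ := lt_of_lt_of_le (by linarith) hcase
    have hmax : max R ‖x‖ = ‖x‖ := max_eq_right (by linarith)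
    have hsand : ∀ y ∈ ball x R,
        m2 * ‖x‖ ^ α ≤ ‖y‖ ^ α ∧ ‖y‖ ^ α ≤ M2 * ‖x‖ ^ α := by
      intro y hy
      have hd : ‖y - x‖ < R := by
        have := mem_ball.1 hy; rwa [dist_eq_norm] at this
      have h1 : (2:ℝ)⁻¹ * ‖x‖ ≤ ‖y‖ := by
        have : ‖x‖ - ‖y‖ ≤ ‖y - x‖ := by
          have := norm_sub_norm_le (x) (y)
          rw [← norm_neg (x - y), neg_sub] at this
          linarith [norm_sub_norm_le x y]
        linarith
      have h2 : ‖y‖ ≤ (3/2 : ℝ) * ‖x‖ := by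
        have : ‖y‖ ≤ ‖x‖ + ‖y - x‖ := norm_le_insert' y x
        linarith
      exact rpow_sandwich (by norm_num) hx0 h1 h2
    constructor
    · -- lower bound
      have hlow : (m2 * ‖x‖ ^ α) * (volume (ball x R)).toReal ≤ ∫ y in ball x R, ‖y‖ ^ α :=
        by have h := setIntegral_ge_of_const_le measurableSet_ball measure_ball_lt_top.ne
             (fun y hy => (hsand y hy).1) (hint x R hR)
           rw [smul_eq_mul, mul_comm] at h; exact h
      rw [hvol] at hlow
      calc min (m2 * ω) (ω * (4:ℝ)⁻¹ ^ n * m1 * M3⁻¹) * R ^ (n : ℝ) * max R ‖x‖ ^ α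
          ≤ (m2 * ω) * R ^ (n : ℝ) * max R ‖x‖ ^ α := by
            exact mul_le_mul_of_nonneg_right
              (mul_le_mul_of_nonneg_right (min_le_left _ _) (by rw [hRn]; positivity))
              hmaxα.le
        _ = (m2 * ‖x‖ ^ α) * (R ^ n * ω) := by rw [hRn, hmax]; ring
        _ ≤ _ := hlow
    · -- upper bound
      have hup : ∫ y in ball x R, ‖y‖ ^ α ≤ (M2 * ‖x‖ ^ α) * (volume (ball x R)).toReal := by
        have := setIntegral_mono_on (hint x R hR)
          (integrableOn_const measure_ball_lt_top.ne) measurableSet_ball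
          (fun y hy => (hsand y hy).2)
        rwa [setIntegral_const, smul_eq_mul, mul_comm] at this
      rw [hvol] at hup
      calc ∫ y in ball x R, ‖y‖ ^ α ≤ (M2 * ‖x‖ ^ α) * (R ^ n * ω) := hup
        _ = (M2 * ω) * R ^ (n : ℝ) * max R ‖x‖ ^ α := by rw [hRn, hmax]; ring
        _ ≤ _ := by
            exact mul_le_mul_of_nonneg_right
              (mul_le_mul_of_nonneg_right (le_max_left _ _) (by rw [hRn]; positivity))
              hmaxα.le
  · -- near case
    have hM1 : (1:ℝ) * R ≤ max R ‖x‖ := by rw [one_mul]; exact le_max_left _ _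
    have hM2' : max R ‖x‖ ≤ 2 * R := max_le (by linarith) hcase.le
    have hsandM := rpow_sandwich (α := α) (a := 1) (b := 2) one_pos hR hM1 hM2'
    have hm3R : m3 * R ^ α ≤ max R ‖x‖ ^ α := hsandM.1
    have hM3R : max R ‖x‖ ^ α ≤ M3 * R ^ α := hsandM.2
    have hRαpos : (0:ℝ) < R ^ α := Real.rpow_pos_of_pos hR _
    constructor
    · -- lower bound via sub-ball
      obtain ⟨z, hz1, hz2⟩ : ∃ z : EuclideanSpace ℝ (Fin n), ‖z - x‖ = R / 2 ∧ ‖z‖ = ‖x‖ + R / 2 := by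
        by_cases hx : x = 0
        · obtain ⟨u, hu⟩ := exists_norm_eq (EuclideanSpace ℝ (Fin n)) zero_le_one
          refine ⟨(R / 2) • u, ?_, ?_⟩
          · rw [hx, sub_zero, norm_smul, Real.norm_eq_abs, abs_of_pos (by linarith), hu, mul_one]
          · rw [hx, norm_zero, zero_add, norm_smul, Real.norm_eq_abs,
              abs_of_pos (by linarith), hu, mul_one]
        · refine ⟨(1 + (R / 2) / ‖x‖) • x, ?_, ?_⟩
          · have : (1 + (R / 2) / ‖x‖) • x - x = ((R / 2) / ‖x‖) • x := by
              rw [add_smul, one_smul]; abel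
            have hxn : (0:ℝ) < ‖x‖ := norm_pos_iff.2 hx
            rw [this, norm_smul, Real.norm_eq_abs, abs_of_pos (by positivity),
              div_mul_cancel₀ _ hxn.ne']
          · have hxn : (0:ℝ) < ‖x‖ := norm_pos_iff.2 hx
            rw [norm_smul, Real.norm_eq_abs, abs_of_pos (by positivity), add_mul, one_mul,
              div_mul_cancel₀ _ hxn.ne']
      have hsub2 : ball z (R / 4) ⊆ ball x R := by
        intro y hy
        have hyz : ‖y - z‖ < R / 4 := by
          have := mem_ball.1 hy; rwa [dist_eq_norm] at this
        rw [mem_ball, dist_eq_norm]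
        calc ‖y - x‖ ≤ ‖y - z‖ + ‖z - x‖ := norm_sub_le_norm_sub_add_norm_sub y z x
          _ < R / 4 + R / 2 := by rw [hz1]; linarith
          _ < R := by linarith
      have hsand1 : ∀ y ∈ ball z (R / 4), m1 * R ^ α ≤ ‖y‖ ^ α := by
        intro y hy
        have hyz : ‖y - z‖ < R / 4 := by
          have := mem_ball.1 hy; rwa [dist_eq_norm] at this
        have h1 : (4:ℝ)⁻¹ * R ≤ ‖y‖ := by
          have : ‖z‖ - ‖y‖ ≤ ‖y - z‖ := by
            rw [← norm_neg (y - z), neg_sub]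
            exact norm_sub_norm_le z y
          have hxnn : (0:ℝ) ≤ ‖x‖ := norm_nonneg _
          rw [hz2] at this
          nlinarith
        have h2 : ‖y‖ ≤ (3:ℝ) * R := by
          have : ‖y‖ ≤ ‖z‖ + ‖y - z‖ := norm_le_insert' y z
          rw [hz2] at this
          nlinarith
        exact (rpow_sandwich (by norm_num) hR h1 h2).1
      have hlow : (m1 * R ^ α) * (volume (ball z (R / 4))).toReal
          ≤ ∫ y in ball z (R / 4), ‖y‖ ^ α :=
        by have h := setIntegral_ge_of_const_le measurableSet_ball measure_ball_lt_top.ne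
             hsand1 (hint z (R / 4) (by linarith))
           rw [smul_eq_mul, mul_comm] at h; exact h
      have hmono : ∫ y in ball z (R / 4), ‖y‖ ^ α ≤ ∫ y in ball x R, ‖y‖ ^ α :=
        setIntegral_mono_set (hint x R hR)
          (Filter.Eventually.of_forall fun y => Real.rpow_nonneg (norm_nonneg _) _)
          (HasSubset.Subset.eventuallyLE hsub2)
      have hvolz : (volume (ball z (R / 4))).toReal = (R / 4) ^ n * ω :=
        aux_volball hn z (by linarith)
      have hRα : M3⁻¹ * max R ‖x‖ ^ α ≤ R ^ α := by
        rw [inv_mul_le_iff₀ hM3]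
        exact hM3R
      calc min (m2 * ω) (ω * (4:ℝ)⁻¹ ^ n * m1 * M3⁻¹) * R ^ (n : ℝ) * max R ‖x‖ ^ α
          ≤ (ω * (4:ℝ)⁻¹ ^ n * m1 * M3⁻¹) * R ^ (n : ℝ) * max R ‖x‖ ^ α := by
            exact mul_le_mul_of_nonneg_right
              (mul_le_mul_of_nonneg_right (min_le_right _ _) (by rw [hRn]; positivity))
              hmaxα.le
        _ = (ω * (4:ℝ)⁻¹ ^ n * m1 * R ^ n) * (M3⁻¹ * max R ‖x‖ ^ α) := by rw [hRn]; ring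
        _ ≤ (ω * (4:ℝ)⁻¹ ^ n * m1 * R ^ n) * R ^ α := by
            exact mul_le_mul_of_nonneg_left hRα (by positivity)
        _ = (m1 * R ^ α) * ((R / 4) ^ n * ω) := by
            rw [div_pow]; field_simp; ring_nf; norm_num [← mul_pow]
        _ ≤ ∫ y in ball z (R / 4), ‖y‖ ^ α := by rw [← hvolz]; exact hlow
        _ ≤ _ := hmono
    · -- upper bound via big ball and scaling
      have hsub3 : ball x R ⊆ ball (0 : EuclideanSpace ℝ (Fin n)) (3 * R) := by
        intro y hy
        have hd : ‖y - x‖ < R := by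
          have := mem_ball.1 hy; rwa [dist_eq_norm] at this
        rw [mem_ball_zero_iff]
        calc ‖y‖ ≤ ‖x‖ + ‖y - x‖ := norm_le_insert' y x
          _ < 2 * R + R := by linarith
          _ = 3 * R := by ring
      have hmono : ∫ y in ball x R, ‖y‖ ^ α ≤ ∫ y in ball (0 : EuclideanSpace ℝ (Fin n)) (3 * R), ‖y‖ ^ α :=
        setIntegral_mono_set (hint 0 (3 * R) (by linarith))
          (Filter.Eventually.of_forall fun y => Real.rpow_nonneg (norm_nonneg _) _)
          (HasSubset.Subset.eventuallyLE hsub3)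
      have hscale : ∫ y in ball (0 : EuclideanSpace ℝ (Fin n)) (3 * R), ‖y‖ ^ α
          = (3 * R) ^ ((n : ℝ) + α) * K := aux_scale hn (3 * R) (by linarith)
      have hpow : (3 * R) ^ ((n : ℝ) + α) = 3 ^ ((n : ℝ) + α) * (R ^ n * R ^ α) := by
        rw [Real.mul_rpow (by norm_num) hR.le, Real.rpow_add hR, Real.rpow_natCast]
      have hRα : R ^ α ≤ m3⁻¹ * max R ‖x‖ ^ α := by
        rw [le_inv_mul_iff₀ hm3]
        exact hm3R
      have h3pos : (0:ℝ) < (3:ℝ) ^ ((n : ℝ) + α) := Real.rpow_pos_of_pos (by norm_num) _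
      calc ∫ y in ball x R, ‖y‖ ^ α ≤ (3 * R) ^ ((n : ℝ) + α) * K := by
            rw [← hscale]; exact hmono
        _ = (3 ^ ((n : ℝ) + α) * K * R ^ n) * R ^ α := by rw [hpow]; ring
        _ ≤ (3 ^ ((n : ℝ) + α) * K * R ^ n) * (m3⁻¹ * max R ‖x‖ ^ α) := by
            exact mul_le_mul_of_nonneg_left hRα (by positivity)
        _ = (3 ^ ((n : ℝ) + α) * K * m3⁻¹) * R ^ (n : ℝ) * max R ‖x‖ ^ α := by
            rw [hRn]; ring
        _ ≤ _ := by
            exact mul_le_mul_of_nonneg_right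
              (mul_le_mul_of_nonneg_right (le_max_right _ _) (by rw [hRn]; positivity))
              hmaxα.le
end
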